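/- arXiv:2009.00854 — 9 statements merged into one kernel-verified Lean document; each statement's English description precedes it below -/
import Mathlib

section
/- Let a₊, a₋ > 0 and γ ∈ ℝ \ {-1}. Define I₁(ρ) = ∫_{a₊(ρ+1)/(a₊+a₋)}^{1} |a₊ - a₊ξ|^{-1/2} |ξ|^{-γ/(γ+1)} dξ and I₂(ρ) = ∫_{a₊/a₋}^{(a₊/(a₊+a₋))·(ρ+1)/ρ} |a₋ξ - a₊|^{-1/2} |ξ|^{-γ/(γ+1)} dξ. Then on the interval of definition the identity I₂'(ρ) = ρ^{-(γ+3)/(2(γ+1))} · I₁'(ρ) holds. -/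
/-!
With `x = a₊(ρ+1)/(a₊+a₋)`, the moving endpoints are `x` for `I₁` and `x / ρ` for `I₂`, and at
these points `a₋ (x/ρ) - a₊ = (a₊ - a₊ x)/ρ`. So after the fundamental theorem of calculus the
integrand of `I₂` at its endpoint is that of `I₁` at its endpoint scaled by
`ρ^{1/2} ρ^{γ/(γ+1)}`, while the endpoint derivatives differ by the factor `ρ⁻²`.
-/

open Set MeasureTheory intervalIntegral

lemma continuousAt_abs_rpow_mul_abs_rpow {h : ℝ → ℝ} {x : ℝ} (p q : ℝ) (hh : ContinuousAt h x)
    (hhx : h x ≠ 0) (hx : x ≠ 0) : ContinuousAt (fun ξ => |h ξ| ^ p * |ξ| ^ q) x :=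
  (hh.abs.rpow_const (Or.inl (abs_ne_zero.mpr hhx))).mul
    (continuous_abs.continuousAt.rpow_const (Or.inl (abs_ne_zero.mpr hx)))

lemma abs_div_rpow_of_pos (u : ℝ) {ρ : ℝ} (hρ : 0 < ρ) (p : ℝ) :
    |u / ρ| ^ p = |u| ^ p * ρ ^ (-p) := by
  rw [abs_div, abs_of_pos hρ, Real.div_rpow (abs_nonneg _) hρ.le, div_eq_mul_inv,
    ← Real.rpow_neg hρ.le]

section MovingEndpoint

variable {f g : ℝ → ℝ} {a b g' ρ : ℝ}

theorem HasDerivAt.intervalIntegral_comp_lower (hf : IntervalIntegrable f volume (g ρ) b)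
    (hfm : Measurable f) (hfc : ContinuousAt f (g ρ)) (hg : HasDerivAt g g' ρ) :
    HasDerivAt (fun s => ∫ ξ in g s..b, f ξ) (-f (g ρ) * g') ρ :=
  (integral_hasDerivAt_left hf hfm.stronglyMeasurable.stronglyMeasurableAtFilter hfc).comp ρ hg

theorem HasDerivAt.intervalIntegral_comp_upper (hf : IntervalIntegrable f volume a (g ρ))
    (hfm : Measurable f) (hfc : ContinuousAt f (g ρ)) (hg : HasDerivAt g g' ρ) :
    HasDerivAt (fun s => ∫ ξ in a..g s, f ξ) (f (g ρ) * g') ρ :=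
  (integral_hasDerivAt_right hf hfm.stronglyMeasurable.stronglyMeasurableAtFilter hfc).comp ρ hg

end MovingEndpoint

lemma pos_ne_ne_of_mem_domain {ap am γ ρ : ℝ} (hap : 0 < ap) (ham : 0 < am)
    (hρ : (-1 < γ ∧ ρ ∈ Ioo 0 (am / ap)) ∨ (γ < -1 ∧ ρ ∈ Ioi (am / ap))) :
    0 < ρ ∧ ap * ρ ≠ am ∧ γ + 1 ≠ 0 := by
  rcases hρ with ⟨hγ, hρ₀, hρ₁⟩ | ⟨hγ, hρ₁⟩
  · exact ⟨hρ₀, ((lt_div_iff₀' hap).mp hρ₁).ne, by linarith⟩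
  · exact ⟨(div_pos ham hap).trans hρ₁, ((div_lt_iff₀' hap).mp hρ₁).ne', by linarith⟩

lemma rpow_half_mul_rpow_div_sq {γ ρ : ℝ} (hγ : γ + 1 ≠ 0) (hρ : 0 < ρ) :
    ρ ^ ((1 : ℝ) / 2) * ρ ^ (γ / (γ + 1)) / ρ ^ 2 = ρ ^ (-((γ + 3) / (2 * (γ + 1)))) := by
  rw [← Real.rpow_add hρ, ← Real.rpow_natCast ρ 2, ← Real.rpow_sub hρ]
  congr 1
  field_simp
  ring

theorem stmt_1_general (ap am γ : ℝ) (hap : 0 < ap) (ham : 0 < am)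
    (I₁ I₂ : ℝ → ℝ)
    (hI₁ : ∀ ρ : ℝ, I₁ ρ =
      ∫ ξ in (ap * (ρ + 1) / (ap + am))..1,
        |ap - ap * ξ| ^ (-(1 : ℝ) / 2) * |ξ| ^ (-(γ / (γ + 1))))
    (hI₂ : ∀ ρ : ℝ, I₂ ρ =
      ∫ ξ in (ap / am)..(ap / (ap + am) * ((ρ + 1) / ρ)),
        |am * ξ - ap| ^ (-(1 : ℝ) / 2) * |ξ| ^ (-(γ / (γ + 1))))
    (ρ : ℝ)
    (hρ : (-1 < γ ∧ ρ ∈ Ioo 0 (am / ap)) ∨ (γ < -1 ∧ ρ ∈ Ioi (am / ap)))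
    (hint₁ : ∀ s : ℝ,
      ((-1 < γ ∧ s ∈ Ioo 0 (am / ap)) ∨ (γ < -1 ∧ s ∈ Ioi (am / ap))) →
      IntervalIntegrable
        (fun ξ : ℝ => |ap - ap * ξ| ^ (-(1 : ℝ) / 2) * |ξ| ^ (-(γ / (γ + 1))))
        volume (ap * (s + 1) / (ap + am)) 1)
    (hint₂ : ∀ s : ℝ,
      ((-1 < γ ∧ s ∈ Ioo 0 (am / ap)) ∨ (γ < -1 ∧ s ∈ Ioi (am / ap))) →
      IntervalIntegrable
        (fun ξ : ℝ => |am * ξ - ap| ^ (-(1 : ℝ) / 2) * |ξ| ^ (-(γ / (γ + 1))))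
        volume (ap / am) (ap / (ap + am) * ((s + 1) / s))) :
    deriv I₂ ρ = ρ ^ (-((γ + 3) / (2 * (γ + 1)))) * deriv I₁ ρ := by
  obtain ⟨hρ₀, hρ₁, hγ⟩ := pos_ne_ne_of_mem_domain hap ham hρ
  have hsum : 0 < ap + am := add_pos hap ham
  set x := ap * (ρ + 1) / (ap + am) with hx_def
  have hx : 0 < x := by positivity
  have hx₂ : ap / (ap + am) * ((ρ + 1) / ρ) = x / ρ := by rw [hx_def]; field_simp
  have hA : ap - ap * x = ap * (am - ap * ρ) / (ap + am) := by rw [hx_def]; field_simp; ring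
  have hA₀ : ap - ap * x ≠ 0 := by
    rw [hA]; exact div_ne_zero (mul_ne_zero hap.ne' (sub_ne_zero.mpr hρ₁.symm)) hsum.ne'
  have hB : am * (x / ρ) - ap = (ap - ap * x) / ρ := by rw [hx_def]; field_simp; ring
  have hB₀ : am * (x / ρ) - ap ≠ 0 := by rw [hB]; exact div_ne_zero hA₀ hρ₀.ne'
  have hI₁' : HasDerivAt I₁
      (-(|ap - ap * x| ^ (-(1 : ℝ) / 2) * |x| ^ (-(γ / (γ + 1)))) * (ap / (ap + am))) ρ := by
    rw [funext hI₁]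
    refine HasDerivAt.intervalIntegral_comp_lower (hint₁ ρ hρ) (by fun_prop)
      (continuousAt_abs_rpow_mul_abs_rpow _ _ (by fun_prop) hA₀ hx.ne') ?_
    simpa using (((hasDerivAt_id ρ).add_const 1).const_mul ap).div_const (ap + am)
  have hI₂' : HasDerivAt I₂
      (|am * (x / ρ) - ap| ^ (-(1 : ℝ) / 2) * |x / ρ| ^ (-(γ / (γ + 1))) *
        (ap / (ap + am) * (-1 / ρ ^ 2))) ρ := by
    rw [funext hI₂, ← hx₂]
    refine HasDerivAt.intervalIntegral_comp_upper (hint₂ ρ hρ) (by fun_prop)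
      (continuousAt_abs_rpow_mul_abs_rpow _ _ (by fun_prop) (by rwa [hx₂])
        (by rw [hx₂]; positivity)) ?_
    have hq := ((hasDerivAt_id ρ).add_const 1).div (hasDerivAt_id ρ) hρ₀.ne'
    exact (hq.const_mul _).congr_deriv (by simp)
  rw [hI₂'.deriv, hI₁'.deriv, hB, abs_div_rpow_of_pos _ hρ₀, abs_div_rpow_of_pos _ hρ₀,
    ← rpow_half_mul_rpow_div_sq hγ hρ₀]
  field_simp

/-- the identity `I₂'(ρ) = ρ^{-(γ+3)/(2(γ+1))} I₁'(ρ)`. -/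
theorem stmt_1 (ap am γ : ℝ) (hap : 0 < ap) (ham : 0 < am) (hγ : γ ≠ -1)
    (I₁ I₂ : ℝ → ℝ)
    (hI₁ : ∀ ρ : ℝ, I₁ ρ =
      ∫ ξ in (ap * (ρ + 1) / (ap + am))..1,
        |ap - ap * ξ| ^ (-(1 : ℝ) / 2) * |ξ| ^ (-(γ / (γ + 1))))
    (hI₂ : ∀ ρ : ℝ, I₂ ρ =
      ∫ ξ in (ap / am)..(ap / (ap + am) * ((ρ + 1) / ρ)),
        |am * ξ - ap| ^ (-(1 : ℝ) / 2) * |ξ| ^ (-(γ / (γ + 1))))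
    (ρ : ℝ)
    (hρ : (-1 < γ ∧ ρ ∈ Ioo 0 (am / ap)) ∨ (γ < -1 ∧ ρ ∈ Ioi (am / ap)))
    (hint₁ : ∀ s : ℝ,
      ((-1 < γ ∧ s ∈ Ioo 0 (am / ap)) ∨ (γ < -1 ∧ s ∈ Ioi (am / ap))) →
      IntervalIntegrable
        (fun ξ : ℝ => |ap - ap * ξ| ^ (-(1 : ℝ) / 2) * |ξ| ^ (-(γ / (γ + 1))))
        volume (ap * (s + 1) / (ap + am)) 1)
    (hint₂ : ∀ s : ℝ,
      ((-1 < γ ∧ s ∈ Ioo 0 (am / ap)) ∨ (γ < -1 ∧ s ∈ Ioi (am / ap))) →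
      IntervalIntegrable
        (fun ξ : ℝ => |am * ξ - ap| ^ (-(1 : ℝ) / 2) * |ξ| ^ (-(γ / (γ + 1))))
        volume (ap / am) (ap / (ap + am) * ((s + 1) / s))) :
    deriv I₂ ρ = ρ ^ (-((γ + 3) / (2 * (γ + 1)))) * deriv I₁ ρ :=
  stmt_1_general ap am γ hap ham I₁ I₂ hI₁ hI₂ ρ hρ hint₁ hint₂
end

section
/- Let a₊, a₋ > 0 and γ > 1. With I₁, I₂ as above defined on ]0, a₋/a₊[, the function F₂(ρ) = ρ^{(γ-1)/(2(γ+1))} · I₁(ρ)/I₂(ρ) is strictly monotone increasing on ]0, a₋/a₊[. -/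
/-!
Write `κ = γ/(γ+1)`, `φ x = |x|^(-κ)`, `q = ρ/(1+ρ)` and `c = a₋/(a₊+a₋)`. The affine substitutions
moving the singular endpoint of each integral to `0` turn `I₂(ρ)` into a multiple of
`D(q) = ∫₀¹ u^(-1/2) φ(q + (c-q)u) du`, an integral along the segment from `q` to `c`, and `I₁(ρ)`
into a multiple of the same integral `N(q)` along the segment from `1-q` to `1-c`; together with
`ρ^((γ-1)/(2(γ+1)))` the multiples give the constant `(a₋/a₊)^(1-κ)`. As `q` grows, every point of
the first segment moves right and every point of the second moves left, so, `φ` being strictly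
decreasing on `]0, ∞[`, `D` strictly decreases and `N` strictly increases.
-/

open Set MeasureTheory intervalIntegral

section UnitInterval

variable {E : Type*} [NormedAddCommGroup E] [NormedSpace ℝ E]

theorem intervalIntegral.integral_eq_sub_smul_integral_unit (f : ℝ → E) (a b : ℝ) :
    ∫ x in a..b, f x = (b - a) • ∫ u in (0:ℝ)..1, f (a + (b - a) * u) := by
  have h := smul_integral_comp_mul_add (a := 0) (b := 1) f (b - a) a
  simp only [mul_zero, zero_add, mul_one, sub_add_cancel] at h
  simp only [← h, add_comm a]

theorem intervalIntegral.integral_eq_sub_smul_integral_unit' (f : ℝ → E) (a b : ℝ) :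
    ∫ x in a..b, f x = (b - a) • ∫ u in (0:ℝ)..1, f (b - (b - a) * u) := by
  rw [integral_symm, integral_eq_sub_smul_integral_unit f b a, ← neg_smul, neg_sub]
  congr 2 with u
  ring_nf

end UnitInterval

noncomputable def segmentIntegral (r : ℝ) (φ : ℝ → ℝ) (s c : ℝ) : ℝ :=
  ∫ u in (0:ℝ)..1, u ^ r * φ (s + (c - s) * u)

section

variable {r : ℝ} {φ : ℝ → ℝ} {S : Set ℝ} {s c : ℝ}

lemma Convex.add_sub_mul_mem (hS : Convex ℝ S) (hs : s ∈ S) (hc : c ∈ S) {u : ℝ}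
    (hu : u ∈ Icc 0 1) : s + (c - s) * u ∈ S := by
  simpa only [smul_eq_mul, mul_comm u] using hS.add_smul_sub_mem hs hc hu

lemma intervalIntegrable_rpow_mul_comp_segment (hr : -1 < r) (hS : Convex ℝ S)
    (hφ : ContinuousOn φ S) (hs : s ∈ S) (hc : c ∈ S) :
    IntervalIntegrable (fun u => u ^ r * φ (s + (c - s) * u)) volume 0 1 :=
  (intervalIntegrable_rpow' hr).mul_continuousOn <| hφ.comp (by fun_prop) fun _ hu =>
    hS.add_sub_mul_mem hs hc (by rwa [uIcc_of_le zero_le_one] at hu)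

lemma segmentIntegral_pos (hr : -1 < r) (hS : Convex ℝ S) (hφ : ContinuousOn φ S)
    (hφ_pos : ∀ x ∈ S, 0 < φ x) (hs : s ∈ S) (hc : c ∈ S) : 0 < segmentIntegral r φ s c :=
  intervalIntegral_pos_of_pos_on (intervalIntegrable_rpow_mul_comp_segment hr hS hφ hs hc)
    (fun _ hu => mul_pos (Real.rpow_pos_of_pos hu.1 _)
      (hφ_pos _ (hS.add_sub_mul_mem hs hc (Ioo_subset_Icc_self hu))))
    zero_lt_one

lemma strictAntiOn_segmentIntegral (hr : -1 < r) (hS : Convex ℝ S) (hφ : ContinuousOn φ S)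
    (hφ_anti : StrictAntiOn φ S) (hc : c ∈ S) :
    StrictAntiOn (fun s => segmentIntegral r φ s c) S := by
  intro s₁ hs₁ s₂ hs₂ hlt
  dsimp only [segmentIntegral]
  rw [← sub_pos,
    ← integral_sub (intervalIntegrable_rpow_mul_comp_segment hr hS hφ hs₁ hc)
      (intervalIntegrable_rpow_mul_comp_segment hr hS hφ hs₂ hc)]
  refine intervalIntegral_pos_of_pos_on
    ((intervalIntegrable_rpow_mul_comp_segment hr hS hφ hs₁ hc).sub
      (intervalIntegrable_rpow_mul_comp_segment hr hS hφ hs₂ hc)) (fun u hu => ?_) zero_lt_one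
  rw [← mul_sub]
  refine mul_pos (Real.rpow_pos_of_pos hu.1 _) (sub_pos.2 (hφ_anti
    (hS.add_sub_mul_mem hs₁ hc (Ioo_subset_Icc_self hu))
    (hS.add_sub_mul_mem hs₂ hc (Ioo_subset_Icc_self hu)) ?_))
  nlinarith [hu.2]

lemma strictMonoOn_segmentIntegral_div (hr : -1 < r) (hφ : ContinuousOn φ (Ioi 0))
    (hφ_pos : ∀ x ∈ Ioi 0, 0 < φ x) (hφ_anti : StrictAntiOn φ (Ioi 0)) (hc : c < 1) :
    StrictMonoOn (fun s => segmentIntegral r φ (1 - s) (1 - c) / segmentIntegral r φ s c)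
      (Ioo 0 c) := by
  have hc₀ : (1 - c) ∈ Ioi (0:ℝ) := sub_pos.2 hc
  have h1s : ∀ s ∈ Ioo 0 c, 1 - s ∈ Ioi (0:ℝ) := fun s hs => sub_pos.2 (hs.2.trans hc)
  intro s₁ hs₁ s₂ hs₂ hlt
  have hc' : c ∈ Ioi (0:ℝ) := hs₁.1.trans hs₁.2
  exact div_lt_div₀
    (strictAntiOn_segmentIntegral hr (convex_Ioi 0) hφ hφ_anti hc₀ (h1s s₂ hs₂) (h1s s₁ hs₁)
      (by linarith))
    ((strictAntiOn_segmentIntegral hr (convex_Ioi 0) hφ hφ_anti hc' hs₁.1 hs₂.1 hlt).le)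
    (segmentIntegral_pos hr (convex_Ioi 0) hφ hφ_pos (h1s s₂ hs₂) hc₀).le
    (segmentIntegral_pos hr (convex_Ioi 0) hφ hφ_pos hs₂.1 hc')

lemma strictMonoOn_segmentIntegral_abs_rpow_div {κ : ℝ} (hr : -1 < r) (hκ : 0 < κ) (hc : c < 1) :
    StrictMonoOn (fun s => segmentIntegral r (fun x => |x| ^ (-κ)) (1 - s) (1 - c) /
      segmentIntegral r (fun x => |x| ^ (-κ)) s c) (Ioo 0 c) := by
  refine strictMonoOn_segmentIntegral_div hr ?_ (fun x hx => ?_) ?_ hc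
  · exact continuous_abs.continuousOn.rpow_const fun x hx => Or.inl (abs_pos.2 (ne_of_gt hx)).ne'
  · exact Real.rpow_pos_of_pos (abs_pos.2 (ne_of_gt hx)) _
  · intro x (hx : 0 < x) y (hy : 0 < y) hxy
    simp only [abs_of_pos hx, abs_of_pos hy]
    exact Real.rpow_lt_rpow_of_neg hx hxy (neg_neg_of_pos hκ)

end

section

variable {ap am ρ : ℝ} (κ : ℝ)

lemma integral_I₁_eq_segmentIntegral (hap : 0 < ap) (hρ : 0 < ρ) (hρ' : ρ < am / ap) :
    ∫ ξ in (ap * (ρ + 1) / (ap + am))..1, |ap - ap * ξ| ^ (-(1:ℝ)/2) * |ξ| ^ (-κ) =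
      (1 - ap * (ρ + 1) / (ap + am)) * (ap * (1 - ap * (ρ + 1) / (ap + am))) ^ (-(1:ℝ)/2) *
        (1 + ρ) ^ (-κ) * segmentIntegral (-(1:ℝ)/2) (fun x => |x| ^ (-κ))
          (1 - ρ / (1 + ρ)) (1 - am / (ap + am)) := by
  have hρam : ap * ρ < am := by rwa [lt_div_iff₀ hap, mul_comm] at hρ'
  have hsum : 0 < ap + am := by nlinarith
  rw [integral_eq_sub_smul_integral_unit', smul_eq_mul, segmentIntegral,
    ← intervalIntegral.integral_const_mul, ← intervalIntegral.integral_const_mul]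
  set δ := 1 - ap * (ρ + 1) / (ap + am) with hδ
  have hapδ : 0 ≤ ap * δ :=
    mul_nonneg hap.le (by rw [hδ, sub_nonneg, div_le_one hsum]; linarith)
  refine integral_congr fun u hu => ?_
  rw [uIcc_of_le zero_le_one] at hu
  have h_lin : ap - ap * (1 - δ * u) = (ap * δ) * u := by ring
  have h_scale :
      1 - δ * u = (1 + ρ) * (1 - ρ / (1 + ρ) + (1 - am / (ap + am) - (1 - ρ / (1 + ρ))) * u) := by
    rw [hδ]; field_simp; ring
  rw [h_lin, h_scale, abs_mul (ap * δ), abs_mul (1 + ρ), abs_of_nonneg hapδ, abs_of_nonneg hu.1,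
    abs_of_pos (by linarith : (0:ℝ) < 1 + ρ), Real.mul_rpow hapδ hu.1,
    Real.mul_rpow (by linarith) (abs_nonneg _)]
  ring

lemma integral_I₂_eq_segmentIntegral (hap : 0 < ap) (ham : 0 < am) (hρ : 0 < ρ)
    (hρ' : ρ < am / ap) :
    ∫ ξ in (ap / am)..(ap / (ap + am) * ((ρ + 1) / ρ)),
        |am * ξ - ap| ^ (-(1:ℝ)/2) * |ξ| ^ (-κ) =
      (1 - ap * (ρ + 1) / (ap + am)) * (ap / (am * ρ)) *
        (am * ((1 - ap * (ρ + 1) / (ap + am)) * (ap / (am * ρ)))) ^ (-(1:ℝ)/2) *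
        ((1 + ρ) * (ap / (am * ρ))) ^ (-κ) * segmentIntegral (-(1:ℝ)/2) (fun x => |x| ^ (-κ))
          (ρ / (1 + ρ)) (am / (ap + am)) := by
  have hρam : ap * ρ < am := by rwa [lt_div_iff₀ hap, mul_comm] at hρ'
  have hsum : 0 < ap + am := by linarith
  set δ := 1 - ap * (ρ + 1) / (ap + am) with hδ
  set t := ap / (am * ρ) with ht
  have hδ₀ : 0 ≤ δ := by rw [hδ, sub_nonneg, div_le_one hsum]; linarith
  have ht₀ : 0 < t := by positivity
  have hlen : ap / (ap + am) * ((ρ + 1) / ρ) - ap / am = δ * t := by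
    rw [hδ, ht]; field_simp; ring
  rw [integral_eq_sub_smul_integral_unit, smul_eq_mul, hlen, segmentIntegral,
    ← intervalIntegral.integral_const_mul, ← intervalIntegral.integral_const_mul]
  refine integral_congr fun u hu => ?_
  rw [uIcc_of_le zero_le_one] at hu
  have h_lin : am * (ap / am + δ * t * u) - ap = (am * (δ * t)) * u := by field_simp; ring
  have h_scale :
      ap / am + δ * t * u = ((1 + ρ) * t) * (ρ / (1 + ρ) + (am / (ap + am) - ρ / (1 + ρ)) * u) := by
    rw [hδ, ht]; field_simp; ring
  have hamδt : 0 ≤ am * (δ * t) := by positivity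
  have hscale : 0 < (1 + ρ) * t := by positivity
  rw [h_lin, h_scale, abs_mul (am * (δ * t)), abs_mul ((1 + ρ) * t), abs_of_nonneg hamδt,
    abs_of_nonneg hu.1, abs_of_pos hscale, Real.mul_rpow hamδt hu.1,
    Real.mul_rpow hscale.le (abs_nonneg _)]
  ring

lemma rpow_mul_integral_div_integral_eq (hap : 0 < ap) (ham : 0 < am) (hρ : 0 < ρ)
    (hρ' : ρ < am / ap) :
    ρ ^ (κ - 1/2) *
      ((∫ ξ in (ap * (ρ + 1) / (ap + am))..1, |ap - ap * ξ| ^ (-(1:ℝ)/2) * |ξ| ^ (-κ)) /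
        ∫ ξ in (ap / am)..(ap / (ap + am) * ((ρ + 1) / ρ)),
          |am * ξ - ap| ^ (-(1:ℝ)/2) * |ξ| ^ (-κ)) =
      (am / ap) ^ (1 - κ) *
        (segmentIntegral (-(1:ℝ)/2) (fun x => |x| ^ (-κ)) (1 - ρ / (1 + ρ)) (1 - am / (ap + am)) /
          segmentIntegral (-(1:ℝ)/2) (fun x => |x| ^ (-κ)) (ρ / (1 + ρ)) (am / (ap + am))) := by
  rw [integral_I₁_eq_segmentIntegral κ hap hρ hρ', integral_I₂_eq_segmentIntegral κ hap ham hρ hρ',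
    mul_div_mul_comm, ← mul_assoc]
  congr 1
  have hρam : ap * ρ < am := by rwa [lt_div_iff₀ hap, mul_comm] at hρ'
  set δ := 1 - ap * (ρ + 1) / (ap + am)
  have hδ : 0 < δ := by
    rw [sub_pos, div_lt_one (by linarith)]; linarith
  refine Real.log_injOn_pos (Set.mem_Ioi.2 (by positivity)) (Set.mem_Ioi.2 (by positivity)) ?_
  simp (disch := positivity) only [Real.log_mul, Real.log_div, Real.log_rpow]
  ring

lemma div_one_add_mem_Ioo (hap : 0 < ap) (ham : 0 < am) (hρ : ρ ∈ Ioo 0 (am / ap)) :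
    ρ / (1 + ρ) ∈ Ioo 0 (am / (ap + am)) := by
  obtain ⟨hρ₀, hρ₁⟩ := hρ
  rw [lt_div_iff₀ hap] at hρ₁
  refine ⟨by positivity, ?_⟩
  rw [div_lt_div_iff₀ (by linarith) (by linarith)]
  linarith

end

/-- for `γ > 1`, `F₂(ρ) = ρ^{(γ-1)/(2(γ+1))} I₁(ρ)/I₂(ρ)` is strictly
increasing on `]0, a₋/a₊[`. -/
theorem stmt_3 (ap am γ : ℝ) (hap : 0 < ap) (ham : 0 < am) (hγ : 1 < γ)
    (I₁ I₂ F₂ : ℝ → ℝ)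
    (hI₁ : ∀ ρ : ℝ, I₁ ρ =
      ∫ ξ in (ap * (ρ + 1) / (ap + am))..1,
        |ap - ap * ξ| ^ (-(1 : ℝ) / 2) * |ξ| ^ (-(γ / (γ + 1))))
    (hI₂ : ∀ ρ : ℝ, I₂ ρ =
      ∫ ξ in (ap / am)..(ap / (ap + am) * ((ρ + 1) / ρ)),
        |am * ξ - ap| ^ (-(1 : ℝ) / 2) * |ξ| ^ (-(γ / (γ + 1))))
    (hF₂ : ∀ ρ : ℝ, F₂ ρ = ρ ^ ((γ - 1) / (2 * (γ + 1))) * (I₁ ρ / I₂ ρ)) :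
    StrictMonoOn F₂ (Ioo 0 (am / ap)) := by
  have hκ : 0 < γ / (γ + 1) := div_pos (by linarith) (by linarith)
  have hexp : (γ - 1) / (2 * (γ + 1)) = γ / (γ + 1) - 1 / 2 := by
    field_simp; ring
  have hc : am / (ap + am) < 1 := (div_lt_one (by linarith)).2 (by linarith)
  intro ρ₁ hρ₁ ρ₂ hρ₂ hlt
  rw [hF₂, hF₂, hI₁, hI₁, hI₂, hI₂, hexp,
    rpow_mul_integral_div_integral_eq _ hap ham hρ₁.1 hρ₁.2,
    rpow_mul_integral_div_integral_eq _ hap ham hρ₂.1 hρ₂.2]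
  refine mul_lt_mul_of_pos_left (strictMonoOn_segmentIntegral_abs_rpow_div (by norm_num) hκ hc
    (div_one_add_mem_Ioo hap ham hρ₁) (div_one_add_mem_Ioo hap ham hρ₂) ?_) (by positivity)
  rw [div_lt_div_iff₀ (by linarith [hρ₁.1]) (by linarith [hρ₂.1])]
  linarith
end

section
/- Let a₊, a₋ > 0 and γ ∈ ℝ \ {-1} with γ > 1 or γ ≤ -3. Then lim_{ρ → a₋/a₊} I₁(ρ)/I₂(ρ) = (a₋/a₊)^{-(γ-1)/(2(γ+1)) + 1}, and consequently lim_{ρ → a₋/a₊} F₂(ρ) = a₋/a₊, where F₂(ρ) = ρ^{(γ-1)/(2(γ+1))} I₁(ρ)/I₂(ρ). -/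
/-!
Near its singular endpoint each time-map integrand is `|ξ - c|^(-1/2)` times the weight
`w ξ = |ξ|^α`, `α = -γ/(γ+1)`, which is continuous and positive there. Hence each integral is
`w c + o(1)` times the explicit integral `∫ |ξ - c|^(-1/2) = 2 (c - x) |c - x|^(-1/2)`.
The endpoints `L = a₊(ρ+1)/(a₊+a₋)` of `I₁` and `U = a₊(ρ+1)/((a₊+a₋)ρ)` of `I₂` satisfy
`1 - L = (a₋ρ/a₊)(U - a₊/a₋)`, so the two explicit integrals have the ratio
`-(a₋ρ/a₊)^(1/2)`, and `I₁/I₂ → (a₋/a₊)^(3/2) w 1 / w (a₊/a₋) = (a₋/a₊)^(3/2+α)`.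
-/

open Set MeasureTheory intervalIntegral Filter Topology Asymptotics

section AbsRpow

variable {r : ℝ}

theorem integral_abs_rpow (hr : -1 < r) (s : ℝ) :
    ∫ t in (0 : ℝ)..s, |t| ^ r = s * |s| ^ r / (r + 1) := by
  have hpos : ∀ s, 0 ≤ s → ∫ t in (0 : ℝ)..s, |t| ^ r = s * |s| ^ r / (r + 1) := by
    intro s hs
    rw [integral_congr (g := fun t => t ^ r) fun t ht => by
        rw [uIcc_of_le hs] at ht
        simp only [abs_of_nonneg ht.1],
      integral_rpow (Or.inl hr), Real.zero_rpow (by linarith), sub_zero, abs_of_nonneg hs,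
      Real.rpow_add_one' hs (by linarith), mul_comm]
  rcases le_total 0 s with hs | hs
  · exact hpos s hs
  · calc ∫ t in (0 : ℝ)..s, |t| ^ r = ∫ t in (0 : ℝ)..s, |-t| ^ r := by simp only [abs_neg]
      _ = -∫ t in (0 : ℝ)..-s, |t| ^ r := by
        rw [integral_comp_neg (fun t => |t| ^ r), neg_zero, integral_symm]
      _ = s * |s| ^ r / (r + 1) := by rw [hpos (-s) (by linarith), abs_neg]; ring

theorem integral_abs_sub_rpow (hr : -1 < r) (x c : ℝ) :
    ∫ ξ in x..c, |ξ - c| ^ r = (c - x) * |c - x| ^ r / (r + 1) := by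
  rw [integral_comp_sub_right (fun t => |t| ^ r), sub_self, integral_symm,
    integral_abs_rpow hr, abs_sub_comm]
  ring

theorem intervalIntegrable_abs_sub_rpow (hr : -1 < r) (c a b : ℝ) :
    IntervalIntegrable (fun ξ => |ξ - c| ^ r) volume a b := by
  have hpos : ∀ s, 0 ≤ s → IntervalIntegrable (fun t : ℝ => |t| ^ r) volume 0 s := fun s hs =>
    (intervalIntegrable_rpow' hr).congr_uIoo fun t ht => by
      rw [uIoo_of_le hs] at ht
      simp only [abs_of_pos ht.1]
  have hzero : ∀ s, IntervalIntegrable (fun t : ℝ => |t| ^ r) volume 0 s := by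
    intro s
    rcases le_total 0 s with hs | hs
    · exact hpos s hs
    · simpa only [neg_zero, neg_neg, abs_neg] using
        (IntervalIntegrable.iff_comp_neg).mp (hpos (-s) (by linarith))
  simpa only [sub_add_cancel] using
    ((hzero (a - c)).symm.trans (hzero (b - c))).comp_sub_right c

theorem integral_abs_sub_rpow_ne_zero (hr : -1 < r) {x c : ℝ} (hx : x ≠ c) :
    ∫ ξ in x..c, |ξ - c| ^ r ≠ 0 := by
  have hcx : c - x ≠ 0 := sub_ne_zero.mpr hx.symm
  rw [integral_abs_sub_rpow hr]
  have : 0 < |c - x| ^ r := Real.rpow_pos_of_pos (abs_pos.mpr hcx) r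
  have : r + 1 ≠ 0 := by linarith
  positivity

theorem integral_abs_sub_rpow_eq_neg_rpow_mul (hr : -1 < r) {t x c y d : ℝ}
    (ht : 0 < t) (h : c - x = t * (y - d)) :
    ∫ ξ in x..c, |ξ - c| ^ r = -(t ^ (r + 1) * ∫ ξ in y..d, |ξ - d| ^ r) := by
  rw [integral_abs_sub_rpow hr, integral_abs_sub_rpow hr, h, abs_mul, abs_of_pos ht, abs_sub_comm,
    Real.mul_rpow ht.le (abs_nonneg _), Real.rpow_add_one ht.ne']
  ring

end AbsRpow

theorem integral_abs_mul_sub_rpow_mul {a : ℝ} (ha : 0 < a) (b r x y : ℝ) (f : ℝ → ℝ) :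
    ∫ ξ in x..y, |a * ξ - b| ^ r * f ξ = a ^ r * ∫ ξ in x..y, |ξ - b / a| ^ r * f ξ := by
  rw [← intervalIntegral.integral_const_mul]
  refine integral_congr fun ξ _ => ?_
  rw [show a * ξ - b = a * (ξ - b / a) by field_simp, abs_mul, abs_of_pos ha,
    Real.mul_rpow ha.le (abs_nonneg _), mul_assoc]

theorem isLittleO_integral_mul_sub_mul_integral {k w : ℝ → ℝ} {c : ℝ} {s : Set ℝ}
    (hk₀ : ∀ ξ, 0 ≤ k ξ) (hk : ∀ a b, IntervalIntegrable k volume a b)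
    (hs : s ∈ 𝓝 c) (hw : ContinuousOn w s) :
    (fun x => (∫ ξ in x..c, k ξ * w ξ) - w c * ∫ ξ in x..c, k ξ) =o[𝓝 c]
      fun x => ∫ ξ in x..c, k ξ := by
  refine isLittleO_iff.mpr fun ε hε => ?_
  obtain ⟨δ, hδ, hnear⟩ := Metric.eventually_nhds_iff_ball.mp
    (((hw.continuousAt hs).eventually (Metric.closedBall_mem_nhds _ hε)).and hs)
  filter_upwards [Metric.ball_mem_nhds c hδ] with x hx
  have hsub : uIcc x c ⊆ Metric.ball c δ := by
    rw [Real.ball_eq_Ioo]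
    exact ordConnected_Ioo.uIcc_subset (by rwa [← Real.ball_eq_Ioo]) (by simpa using hδ)
  have hkw : IntervalIntegrable (fun ξ => k ξ * w ξ) volume x c :=
    (hk x c).mul_continuousOn (hw.mono fun ξ hξ => (hnear ξ (hsub hξ)).2)
  rw [← intervalIntegral.integral_const_mul, ← integral_sub hkw ((hk x c).const_mul _)]
  calc ‖∫ ξ in x..c, (k ξ * w ξ - w c * k ξ)‖ ≤ |∫ ξ in x..c, ε * k ξ| := by
        refine norm_integral_le_abs_of_norm_le
          (ae_restrict_of_forall_mem measurableSet_uIoc fun ξ hξ => ?_) ((hk x c).const_mul ε)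
        have hwξ := (hnear ξ (hsub (uIoc_subset_uIcc hξ))).1
        rw [Real.dist_eq] at hwξ
        rw [show k ξ * w ξ - w c * k ξ = k ξ * (w ξ - w c) by ring, norm_mul,
          Real.norm_of_nonneg (hk₀ ξ), mul_comm ε]
        exact mul_le_mul_of_nonneg_left hwξ (hk₀ ξ)
    _ = ε * ‖∫ ξ in x..c, k ξ‖ := by
        rw [intervalIntegral.integral_const_mul, abs_mul, abs_of_pos hε, Real.norm_eq_abs]

noncomputable def powerWeightedAverage (r : ℝ) (w : ℝ → ℝ) (c x : ℝ) : ℝ :=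
  (∫ ξ in x..c, |ξ - c| ^ r * w ξ) / ∫ ξ in x..c, |ξ - c| ^ r

theorem integral_abs_sub_rpow_mul_eq {r : ℝ} (hr : -1 < r) (w : ℝ → ℝ) {x c : ℝ} (hx : x ≠ c) :
    ∫ ξ in x..c, |ξ - c| ^ r * w ξ = powerWeightedAverage r w c x * ∫ ξ in x..c, |ξ - c| ^ r :=
  (div_mul_cancel₀ _ (integral_abs_sub_rpow_ne_zero hr hx)).symm

theorem tendsto_powerWeightedAverage {r : ℝ} (hr : -1 < r) {w : ℝ → ℝ} {c : ℝ} {s : Set ℝ}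
    (hs : s ∈ 𝓝 c) (hw : ContinuousOn w s) :
    Tendsto (powerWeightedAverage r w c) (𝓝[≠] c) (𝓝 (w c)) := by
  have h := (isLittleO_integral_mul_sub_mul_integral (fun ξ => by positivity)
    (intervalIntegrable_abs_sub_rpow hr c) hs hw).tendsto_div_nhds_zero.add_const (w c)
  rw [zero_add] at h
  refine (h.mono_left nhdsWithin_le_nhds).congr' (eventually_nhdsWithin_of_forall fun x hx => ?_)
  rw [sub_div, mul_div_cancel_right₀ _ (integral_abs_sub_rpow_ne_zero hr hx), sub_add_cancel]
  rfl

theorem tendsto_powerWeightedAverage_abs_rpow {r : ℝ} (hr : -1 < r) (α : ℝ) {c : ℝ} (hc : 0 < c) :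
    Tendsto (powerWeightedAverage r (fun ξ => |ξ| ^ α) c) (𝓝[≠] c) (𝓝 (c ^ α)) := by
  simpa only [abs_of_pos hc] using tendsto_powerWeightedAverage hr (Ioi_mem_nhds hc)
    fun ξ (hξ : 0 < ξ) =>
      (continuous_abs.continuousAt.rpow_const (Or.inl (abs_ne_zero.mpr hξ.ne'))).continuousWithinAt

section TimeMap

variable {ap am : ℝ}

theorem one_sub_timeMap_lower_eq (hap : 0 < ap) (ham : 0 < am) {ρ : ℝ} (hρ : ρ ≠ 0) :
    1 - ap * (ρ + 1) / (ap + am) = am * ρ / ap * (ap / (ap + am) * ((ρ + 1) / ρ) - ap / am) := by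
  field_simp
  ring

theorem tendsto_timeMap_lower (hap : 0 < ap) (ham : 0 < am) :
    Tendsto (fun ρ => ap * (ρ + 1) / (ap + am)) (𝓝[≠] (am / ap)) (𝓝[≠] 1) := by
  refine tendsto_nhdsWithin_iff.mpr ⟨?_, eventually_nhdsWithin_of_forall fun ρ hρ hL => hρ ?_⟩
  · have h : ap * (am / ap + 1) / (ap + am) = 1 := by field_simp; ring
    convert ((by fun_prop : Continuous fun ρ => ap * (ρ + 1) / (ap + am)).tendsto
      (am / ap)).mono_left nhdsWithin_le_nhds using 2
    exact h.symm
  · rw [mem_singleton_iff, div_eq_one_iff_eq (by positivity)] at hL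
    rw [mem_singleton_iff, eq_div_iff hap.ne']
    linarith

theorem tendsto_timeMap_upper (hap : 0 < ap) (ham : 0 < am) :
    Tendsto (fun ρ => ap / (ap + am) * ((ρ + 1) / ρ)) (𝓝[≠] (am / ap)) (𝓝[≠] (ap / am)) := by
  have hr : am / ap ≠ 0 := by positivity
  refine tendsto_nhdsWithin_iff.mpr ⟨?_, ?_⟩
  · have h : ap / (ap + am) * ((am / ap + 1) / (am / ap)) = ap / am := by field_simp; ring
    convert (ContinuousAt.tendsto ?_).mono_left nhdsWithin_le_nhds using 2
    · exact h.symm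
    · exact continuousAt_const.mul ((continuousAt_id.add continuousAt_const).div continuousAt_id hr)
  · filter_upwards [(tendsto_timeMap_lower hap ham).eventually self_mem_nhdsWithin,
      eventually_nhdsWithin_of_eventually_nhds (eventually_ne_nhds hr)] with ρ hL hρ hU
    have h := one_sub_timeMap_lower_eq hap ham hρ
    rw [mem_singleton_iff.mp hU, sub_self, mul_zero, sub_eq_zero] at h
    exact hL h.symm

theorem timeMap_ratio_eq (hap : 0 < ap) (ham : 0 < am) (α : ℝ) {ρ : ℝ} (hρ : 0 < ρ)
    (hL : ap * (ρ + 1) / (ap + am) ≠ 1) (hU : ap / (ap + am) * ((ρ + 1) / ρ) ≠ ap / am) :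
    (∫ ξ in (ap * (ρ + 1) / (ap + am))..1, |ap - ap * ξ| ^ (-(1 : ℝ) / 2) * |ξ| ^ α) /
        (∫ ξ in (ap / am)..(ap / (ap + am) * ((ρ + 1) / ρ)),
          |am * ξ - ap| ^ (-(1 : ℝ) / 2) * |ξ| ^ α) =
      ap ^ (-(1 : ℝ) / 2) * (am * ρ / ap) ^ (-(1 : ℝ) / 2 + 1) / am ^ (-(1 : ℝ) / 2) *
        (powerWeightedAverage (-(1 : ℝ) / 2) (fun ξ => |ξ| ^ α) 1 (ap * (ρ + 1) / (ap + am)) /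
          powerWeightedAverage (-(1 : ℝ) / 2) (fun ξ => |ξ| ^ α) (ap / am)
            (ap / (ap + am) * ((ρ + 1) / ρ))) := by
  have hr : -1 < -(1 : ℝ) / 2 := by norm_num
  simp_rw [abs_sub_comm ap]
  rw [integral_abs_mul_sub_rpow_mul hap, integral_abs_mul_sub_rpow_mul ham, div_self hap.ne',
    integral_symm _ (ap / am), integral_abs_sub_rpow_mul_eq hr _ hL,
    integral_abs_sub_rpow_mul_eq hr _ hU,
    integral_abs_sub_rpow_eq_neg_rpow_mul hr (by positivity)
      (one_sub_timeMap_lower_eq hap ham hρ.ne')]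
  have hK := integral_abs_sub_rpow_ne_zero hr hU
  generalize ∫ ξ in (ap / (ap + am) * ((ρ + 1) / ρ))..(ap / am), |ξ - ap / am| ^ (-(1 : ℝ) / 2)
    = K at hK ⊢
  field_simp

theorem tendsto_timeMap_ratio (hap : 0 < ap) (ham : 0 < am) (α : ℝ) :
    Tendsto (fun ρ : ℝ =>
      (∫ ξ in (ap * (ρ + 1) / (ap + am))..1, |ap - ap * ξ| ^ (-(1 : ℝ) / 2) * |ξ| ^ α) /
        ∫ ξ in (ap / am)..(ap / (ap + am) * ((ρ + 1) / ρ)),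
          |am * ξ - ap| ^ (-(1 : ℝ) / 2) * |ξ| ^ α)
      (𝓝[≠] (am / ap)) (𝓝 ((am / ap) ^ (3 / 2 + α))) := by
  have hr : 0 < am / ap := by positivity
  have hL := tendsto_timeMap_lower hap ham
  have hU := tendsto_timeMap_upper hap ham
  have hprefactor : ContinuousAt (fun ρ =>
      ap ^ (-(1 : ℝ) / 2) * (am * ρ / ap) ^ (-(1 : ℝ) / 2 + 1) / am ^ (-(1 : ℝ) / 2)) (am / ap) :=
    (continuousAt_const.mul (((continuousAt_const.mul continuousAt_id).div_const _).rpow_const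
      (Or.inr (by norm_num)))).div_const _
  have hlim := (hprefactor.tendsto.mono_left nhdsWithin_le_nhds).mul
    (((tendsto_powerWeightedAverage_abs_rpow (r := -(1 : ℝ) / 2) (by norm_num) α one_pos).comp
      hL).div ((tendsto_powerWeightedAverage_abs_rpow (r := -(1 : ℝ) / 2) (by norm_num) α
        (by positivity)).comp hU) (Real.rpow_pos_of_pos (by positivity) α).ne')
  have hval : ap ^ (-(1 : ℝ) / 2) * (am * (am / ap) / ap) ^ (-(1 : ℝ) / 2 + 1) /
      am ^ (-(1 : ℝ) / 2) * (1 ^ α / (ap / am) ^ α) = (am / ap) ^ (3 / 2 + α) := by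
    rw [Real.one_rpow, show am * (am / ap) / ap = am / ap * (am / ap) by ring,
      Real.mul_rpow hr.le hr.le, mul_div_right_comm, ← Real.div_rpow hap.le ham.le,
      ← inv_div am ap, Real.inv_rpow hr.le, Real.inv_rpow hr.le, ← Real.rpow_neg hr.le, one_div,
      inv_inv, ← Real.rpow_add hr, ← Real.rpow_add hr, ← Real.rpow_add hr]
    congr 1
    ring
  rw [← hval]
  refine hlim.congr' ?_
  filter_upwards [hL.eventually self_mem_nhdsWithin, hU.eventually self_mem_nhdsWithin,
    eventually_nhdsWithin_of_eventually_nhds (eventually_gt_nhds hr)] with ρ hL1 hUp hρ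
  exact (timeMap_ratio_eq hap ham α hρ hL1 hUp).symm

end TimeMap

/-- as `ρ → a₋/a₊` (from inside the interval of definition),
`I₁(ρ)/I₂(ρ) → (a₋/a₊)^{-(γ-1)/(2(γ+1))+1}` and hence `F₂(ρ) → a₋/a₊`. -/
theorem stmt_5 (ap am γ : ℝ) (hap : 0 < ap) (ham : 0 < am)
    (hγ : 1 < γ ∨ γ ≤ -3)
    (I₁ I₂ F₂ : ℝ → ℝ)
    (hI₁ : ∀ ρ : ℝ, I₁ ρ =
      ∫ ξ in (ap * (ρ + 1) / (ap + am))..1,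
        |ap - ap * ξ| ^ (-(1 : ℝ) / 2) * |ξ| ^ (-(γ / (γ + 1))))
    (hI₂ : ∀ ρ : ℝ, I₂ ρ =
      ∫ ξ in (ap / am)..(ap / (ap + am) * ((ρ + 1) / ρ)),
        |am * ξ - ap| ^ (-(1 : ℝ) / 2) * |ξ| ^ (-(γ / (γ + 1))))
    (hF₂ : ∀ ρ : ℝ, F₂ ρ = ρ ^ ((γ - 1) / (2 * (γ + 1))) * (I₁ ρ / I₂ ρ)) :
    Tendsto (fun ρ : ℝ => I₁ ρ / I₂ ρ)
        (𝓝[if 1 < γ then Iio (am / ap) else Ioi (am / ap)] (am / ap))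
        (𝓝 ((am / ap) ^ (-((γ - 1) / (2 * (γ + 1))) + 1))) ∧
      Tendsto F₂
        (𝓝[if 1 < γ then Iio (am / ap) else Ioi (am / ap)] (am / ap))
        (𝓝 (am / ap)) := by
  have hγ₁ : γ + 1 ≠ 0 := by rcases hγ with h | h <;> intro h' <;> linarith
  have hr : 0 < am / ap := by positivity
  have hside : 𝓝[if 1 < γ then Iio (am / ap) else Ioi (am / ap)] (am / ap) ≤ 𝓝[≠] (am / ap) := by
    split_ifs
    · exact nhdsWithin_mono _ fun ρ hρ => hρ.ne
    · exact nhdsWithin_mono _ fun ρ hρ => hρ.ne'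
  have hratio : Tendsto (fun ρ : ℝ => I₁ ρ / I₂ ρ)
      (𝓝[if 1 < γ then Iio (am / ap) else Ioi (am / ap)] (am / ap))
      (𝓝 ((am / ap) ^ (-((γ - 1) / (2 * (γ + 1))) + 1))) := by
    rw [show -((γ - 1) / (2 * (γ + 1))) + 1 = 3 / 2 + -(γ / (γ + 1)) by field_simp; ring]
    simp only [hI₁, hI₂]
    exact (tendsto_timeMap_ratio hap ham _).mono_left hside
  refine ⟨hratio, ?_⟩
  have hF := (((Real.continuousAt_rpow_const _ ((γ - 1) / (2 * (γ + 1))) (Or.inl hr.ne')).tendsto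
    ).mono_left (hside.trans nhdsWithin_le_nhds)).mul hratio
  rw [← Real.rpow_add hr, add_neg_cancel_left, Real.rpow_one] at hF
  exact hF.congr fun ρ => (hF₂ ρ).symm
end

section
/- Let a₊, a₋ > 0 and γ > 1. Then lim_{ρ → 0⁺} F₂(ρ) = 0, where F₂(ρ) = ρ^{(γ-1)/(2(γ+1))} · I₁(ρ)/I₂(ρ) on ]0, a₋/a₊[. -/
/-!
The integrands are nonnegative, and their singularities `|k ξ - c| ^ (-1/2)` are integrable and
stay away from `ξ = 0`. As `ρ → 0⁺` the lower limit of `I₁` decreases to `a₊ / (a₊ + a₋) < 1`, so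
`I₁` is eventually trapped between `0` and the finite integral over `[a₊ / (a₊ + a₋), 1]`; the upper
limit of `I₂` tends to `+∞`, so `I₂` eventually dominates the positive integral over
`[a₊ / a₋, a₊ / a₋ + 1]`. Thus `I₁ / I₂` stays bounded while `ρ ^ ((γ - 1) / (2 (γ + 1))) → 0`.
-/

open Set MeasureTheory intervalIntegral Filter Topology

theorem intervalIntegrable_abs_rpow {r : ℝ} (hr : -1 < r) (a b : ℝ) :
    IntervalIntegrable (fun x => |x| ^ r) volume a b := by
  have from_zero : ∀ c, 0 ≤ c → IntervalIntegrable (fun x => |x| ^ r) volume 0 c :=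
    fun c hc => (intervalIntegrable_rpow' hr).congr fun x hx => by
      rw [uIoc_of_le hc] at hx
      simp only [abs_of_pos hx.1]
  have to_any : ∀ c, IntervalIntegrable (fun x => |x| ^ r) volume 0 c := by
    intro c
    rcases le_total 0 c with hc | hc
    · exact from_zero c hc
    · simpa using (IntervalIntegrable.iff_comp_neg).mp (from_zero (-c) (by linarith))
  exact (to_any a).symm.trans (to_any b)

theorem intervalIntegrable_abs_mul_sub_rpow {r : ℝ} (hr : -1 < r) (k c a b : ℝ) :
    IntervalIntegrable (fun x => |k * x - c| ^ r) volume a b := by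
  rcases eq_or_ne k 0 with rfl | hk
  · simp
  have shifted : IntervalIntegrable (fun x => |x - c| ^ r) volume (k * a) (k * b) := by
    simpa using (intervalIntegrable_abs_rpow hr (k * a - c) (k * b - c)).comp_sub_right c
  simpa [hk] using shifted.comp_mul_left (c := k)

theorem intervalIntegrable_abs_mul_sub_rpow_mul_abs_rpow {r : ℝ} (hr : -1 < r) (k c p : ℝ)
    {a b : ℝ} (h0 : (0 : ℝ) ∉ uIcc a b) :
    IntervalIntegrable (fun x => |k * x - c| ^ r * |x| ^ p) volume a b :=
  (intervalIntegrable_abs_mul_sub_rpow hr k c a b).mul_continuousOn <|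
    continuous_abs.continuousOn.rpow_const fun _ hx =>
      Or.inl (abs_ne_zero.2 (ne_of_mem_of_not_mem hx h0))

theorem Filter.Tendsto.zero_mul_div_of_bounds {ι : Type*} {l : Filter ι} {f u v : ι → ℝ}
    (hf : Tendsto f l (𝓝 0)) {C D : ℝ} (hD : 0 < D) (hu : ∀ᶠ x in l, 0 ≤ u x ∧ u x ≤ C)
    (hv : ∀ᶠ x in l, D ≤ v x) : Tendsto (fun x => f x * (u x / v x)) l (𝓝 0) := by
  refine hf.zero_mul_isBoundedUnder_le (isBoundedUnder_of_eventually_le (a := C / D) ?_)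
  filter_upwards [hu, hv] with x ⟨hu0, huC⟩ hvD
  have hv0 : 0 < v x := hD.trans_le hvD
  rw [Function.comp_apply, Real.norm_of_nonneg (div_nonneg hu0 hv0.le)]
  exact div_le_div₀ (hu0.trans huC) huC hD hvD

theorem intervalIntegral.integral_mem_Icc_of_le_of_le {f : ℝ → ℝ} {a b x : ℝ}
    (hf : ∀ y, 0 ≤ f y) (hfi : IntervalIntegrable f volume a b) (hax : a ≤ x) (hxb : x ≤ b) :
    ∫ y in x..b, f y ∈ Icc 0 (∫ y in a..b, f y) :=
  ⟨integral_nonneg hxb fun y _ => hf y,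
    integral_mono_interval hax hxb le_rfl (ae_of_all _ fun y => hf y) hfi⟩

theorem intervalIntegral.eventually_integral_le_of_tendsto_atTop {ι : Type*} {l : Filter ι}
    {f : ℝ → ℝ} {a b : ℝ} {u : ι → ℝ} (hf : ∀ y, 0 ≤ f y)
    (hfi : ∀ x, a ≤ x → IntervalIntegrable f volume a x) (hab : a ≤ b)
    (hu : Tendsto u l atTop) : ∀ᶠ i in l, ∫ y in a..b, f y ≤ ∫ y in a..u i, f y := by
  filter_upwards [hu.eventually_ge_atTop b] with i hi
  exact integral_mono_interval le_rfl hab hi (ae_of_all _ fun y => hf y) (hfi _ (hab.trans hi))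

theorem integral_abs_mul_sub_rpow_mul_abs_rpow_pos {r : ℝ} (hr : -1 < r) (p : ℝ) {k c b : ℝ}
    (hk : 0 < k) (hc : 0 < c) (hb : c / k < b) :
    0 < ∫ x in c / k..b, |k * x - c| ^ r * |x| ^ p := by
  refine intervalIntegral_pos_of_pos_on ?_ (fun x hx => ?_) hb
  · exact intervalIntegrable_abs_mul_sub_rpow_mul_abs_rpow hr k c p
      (notMem_uIcc_of_lt (div_pos hc hk) ((div_pos hc hk).trans hb))
  · have hx_pos : 0 < x := (div_pos hc hk).trans hx.1
    have : 0 < |k * x - c| := abs_pos.2 (sub_ne_zero.2 ((div_lt_iff₀' hk).1 hx.1).ne')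
    positivity

theorem eventually_mem_Icc_mul_add_one_div_nhdsGT_zero {a b : ℝ} (ha : 0 < a) (hb : 0 < b) :
    ∀ᶠ ρ in 𝓝[>] 0, a * (ρ + 1) / (a + b) ∈ Icc (a / (a + b)) 1 := by
  filter_upwards [Ioo_mem_nhdsGT (div_pos hb ha)] with ρ ⟨hρ0, hρ⟩
  rw [lt_div_iff₀ ha] at hρ
  constructor
  · gcongr ?_ / _
    exact le_mul_of_one_le_right ha.le (by linarith)
  · rw [div_le_one (by positivity)]
    linarith

theorem tendsto_mul_add_one_div_self_nhdsGT_zero_atTop {L : ℝ} (hL : 0 < L) :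
    Tendsto (fun ρ : ℝ => L * ((ρ + 1) / ρ)) (𝓝[>] 0) atTop := by
  refine tendsto_atTop_mono' _ ?_ (tendsto_inv_nhdsGT_zero.const_mul_atTop hL)
  filter_upwards [self_mem_nhdsWithin] with ρ (hρ : 0 < ρ)
  gcongr
  rw [le_div_iff₀ hρ, inv_mul_cancel₀ hρ.ne']
  linarith

/-- for `γ > 1`, `F₂(ρ) → 0` as `ρ → 0⁺`. -/
theorem stmt_6 (ap am γ : ℝ) (hap : 0 < ap) (ham : 0 < am) (hγ : 1 < γ)
    (I₁ I₂ F₂ : ℝ → ℝ)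
    (hI₁ : ∀ ρ : ℝ, I₁ ρ =
      ∫ ξ in (ap * (ρ + 1) / (ap + am))..1,
        |ap - ap * ξ| ^ (-(1 : ℝ) / 2) * |ξ| ^ (-(γ / (γ + 1))))
    (hI₂ : ∀ ρ : ℝ, I₂ ρ =
      ∫ ξ in (ap / am)..(ap / (ap + am) * ((ρ + 1) / ρ)),
        |am * ξ - ap| ^ (-(1 : ℝ) / 2) * |ξ| ^ (-(γ / (γ + 1))))
    (hF₂ : ∀ ρ : ℝ, F₂ ρ = ρ ^ ((γ - 1) / (2 * (γ + 1))) * (I₁ ρ / I₂ ρ)) :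
    Tendsto F₂ (𝓝[>] (0 : ℝ)) (𝓝 0) := by
  have hr : -1 < -(1 : ℝ) / 2 := by norm_num
  set p := -(γ / (γ + 1))
  have hL : 0 < ap / (ap + am) := by positivity
  have hc : 0 < ap / am := by positivity
  have I₁_bounds : ∀ᶠ ρ in 𝓝[>] 0, 0 ≤ I₁ ρ ∧
      I₁ ρ ≤ ∫ ξ in ap / (ap + am)..1, |ap - ap * ξ| ^ (-(1 : ℝ) / 2) * |ξ| ^ p := by
    filter_upwards [eventually_mem_Icc_mul_add_one_div_nhdsGT_zero hap ham] with ρ ⟨hLℓ, hℓ1⟩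
    rw [hI₁]
    refine integral_mem_Icc_of_le_of_le (fun ξ => by positivity) ?_ hLℓ hℓ1
    simpa only [abs_sub_comm] using intervalIntegrable_abs_mul_sub_rpow_mul_abs_rpow hr ap ap p
      (notMem_uIcc_of_lt hL one_pos)
  have I₂_bound : ∀ᶠ ρ in 𝓝[>] 0,
      ∫ ξ in ap / am..ap / am + 1, |am * ξ - ap| ^ (-(1 : ℝ) / 2) * |ξ| ^ p ≤ I₂ ρ := by
    simp only [hI₂]
    refine eventually_integral_le_of_tendsto_atTop (fun ξ => by positivity) (fun x hx => ?_)
      (by linarith) (tendsto_mul_add_one_div_self_nhdsGT_zero_atTop hL)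
    exact intervalIntegrable_abs_mul_sub_rpow_mul_abs_rpow hr am ap p
      (notMem_uIcc_of_lt hc (hc.trans_le hx))
  have hα : 0 < (γ - 1) / (2 * (γ + 1)) := by apply div_pos <;> linarith
  have rpow_tendsto : Tendsto (fun ρ : ℝ => ρ ^ ((γ - 1) / (2 * (γ + 1)))) (𝓝[>] 0) (𝓝 0) := by
    have := (Real.continuousAt_rpow_const 0 _ (Or.inr hα.le)).tendsto
    rw [Real.zero_rpow hα.ne'] at this
    exact this.mono_left nhdsWithin_le_nhds
  exact (rpow_tendsto.zero_mul_div_of_bounds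
    (integral_abs_mul_sub_rpow_mul_abs_rpow_pos hr p ham hap (by linarith)) I₁_bounds I₂_bound).congr
    fun ρ => (hF₂ ρ).symm
end

section
/- Let a₊, a₋ > 0 and set K₀(γ) = ((1-γ)/(2(γ+1))) · ((a₊+a₋)/a₊)^{(1-γ)/(2(γ+1))} · (a₋/a₊)^{1/2} · ∫_{a₊/(a₊+a₋)}^{1} (1-ξ)^{-1/2} ξ^{-γ/(γ+1)} dξ for γ ∈ ]-1,1[, γ ≠ 0, and K₀(0) = a₋/a₊. Then K₀ : ]-1,1[ → ]0,+∞[ is strictly monotone decreasing, with lim_{γ→(-1)⁺} K₀(γ) = +∞ and lim_{γ→1⁻} K₀(γ) = 0. -/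
open Set MeasureTheory intervalIntegral Filter Topology

/-!
Put `l = a₊/(a₊+a₋)` and `ϑ = θ(γ) = (1-γ)/(2(γ+1)) = 1/(γ+1) - 1/2`, which decreases from `+∞`
to `0` on `]-1,1[`. Pulling `((a₊+a₋)/a₊)^ϑ = l^{-ϑ}` and `ξ^{-γ/(γ+1)} = ξ^{ϑ-1/2}` into the
integral gives `K₀(γ) = (a₋/a₊)^{1/2} η(ϑ)` with `η(ϑ) = ϑ I(ϑ)` and
`I(ϑ) = ∫_l^1 (ξ/l)^ϑ (1-ξ)^{-1/2} ξ^{-1/2} dξ`; at `γ = 0` the same identity follows from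
`∫_l^1 (1-ξ)^{-1/2} dξ = 2(1-l)^{1/2}`. Since `ξ/l ≥ 1` on `[l,1]`, `I` is positive and
nondecreasing in `ϑ`. Hence `η` is strictly increasing, `η(ϑ) ≥ ϑ I(0) → +∞` as `ϑ → +∞`,
and `0 < η(ϑ) ≤ ϑ I(1) → 0` as `ϑ → 0⁺`.
-/

namespace StepwiseWeight

noncomputable def arcsineWeight (ξ : ℝ) : ℝ := (1 - ξ) ^ (-(1 : ℝ) / 2) * ξ ^ (-(1 : ℝ) / 2)

noncomputable def etaIntegral (l t : ℝ) : ℝ := ∫ ξ in l..1, (ξ / l) ^ t * arcsineWeight ξ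

/-- With `l = 1/L`, `eta l ϑ` is the paper's `η(ϑ) = ϑ ∫_{1/L}^1 (Lξ)^ϑ (1-ξ)^{-1/2} ξ^{-1/2} dξ`. -/
noncomputable def eta (l t : ℝ) : ℝ := t * etaIntegral l t

noncomputable def theta (γ : ℝ) : ℝ := (1 - γ) / (2 * (γ + 1))

lemma intervalIntegrable_one_sub_rpow {r : ℝ} (hr : -1 < r) (a b : ℝ) :
    IntervalIntegrable (fun ξ => (1 - ξ) ^ r) volume a b := by
  simpa only [sub_sub_cancel] using
    (intervalIntegral.intervalIntegrable_rpow' (a := 1 - a) (b := 1 - b) hr).comp_sub_left 1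

lemma integral_one_sub_rpow {r : ℝ} (hr : -1 < r) (a : ℝ) :
    ∫ ξ in a..1, (1 - ξ) ^ r = (1 - a) ^ (r + 1) / (r + 1) := by
  rw [intervalIntegral.integral_comp_sub_left (fun x => x ^ r), sub_self,
    integral_rpow (Or.inl hr), Real.zero_rpow (by linarith), sub_zero]

lemma arcsineWeight_nonneg {ξ : ℝ} (h0 : 0 ≤ ξ) (h1 : ξ ≤ 1) : 0 ≤ arcsineWeight ξ :=
  mul_nonneg (Real.rpow_nonneg (by linarith) _) (Real.rpow_nonneg h0 _)

lemma arcsineWeight_pos {ξ : ℝ} (h0 : 0 < ξ) (h1 : ξ < 1) : 0 < arcsineWeight ξ :=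
  mul_pos (Real.rpow_pos_of_pos (by linarith) _) (Real.rpow_pos_of_pos h0 _)

section Eta

variable {l : ℝ}

lemma intervalIntegrable_etaIntegrand (hl : 0 < l) (t : ℝ) :
    IntervalIntegrable (fun ξ => (ξ / l) ^ t * arcsineWeight ξ) volume l 1 := by
  have hpos : ∀ ξ ∈ uIcc l 1, ξ ≠ 0 := fun ξ hξ =>
    (lt_of_lt_of_le (lt_min hl one_pos) hξ.1).ne'
  have hcont : ContinuousOn (fun ξ : ℝ => (ξ / l) ^ t * ξ ^ (-(1 : ℝ) / 2)) (uIcc l 1) :=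
    ((continuousOn_id.div_const l).rpow_const fun _ hξ =>
      Or.inl (div_ne_zero (hpos _ hξ) hl.ne')).mul
      (continuousOn_id.rpow_const fun _ hξ => Or.inl (hpos _ hξ))
  convert (intervalIntegrable_one_sub_rpow (r := -(1 : ℝ) / 2) (by norm_num) l 1).continuousOn_mul hcont using 2
  simp only [arcsineWeight]
  ring

lemma monotone_etaIntegral (hl0 : 0 < l) (hl1 : l ≤ 1) : Monotone (etaIntegral l) :=
  fun t₁ t₂ ht => integral_mono_on hl1 (intervalIntegrable_etaIntegrand hl0 t₁)
    (intervalIntegrable_etaIntegrand hl0 t₂) fun _ hξ =>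
      mul_le_mul_of_nonneg_right
        (Real.rpow_le_rpow_of_exponent_le ((one_le_div hl0).2 hξ.1) ht)
        (arcsineWeight_nonneg (hl0.le.trans hξ.1) hξ.2)

lemma etaIntegral_pos (hl0 : 0 < l) (hl1 : l < 1) (t : ℝ) : 0 < etaIntegral l t :=
  intervalIntegral_pos_of_pos_on (intervalIntegrable_etaIntegrand hl0 t)
    (fun _ hξ => mul_pos (Real.rpow_pos_of_pos (div_pos (hl0.trans hξ.1) hl0) _)
      (arcsineWeight_pos (hl0.trans hξ.1) hξ.2)) hl1

lemma etaIntegral_eq (hl : 0 < l) (t : ℝ) :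
    etaIntegral l t = l⁻¹ ^ t * ∫ ξ in l..1, (1 - ξ) ^ (-(1 : ℝ) / 2) * ξ ^ (t - 1 / 2) := by
  rw [etaIntegral, ← intervalIntegral.integral_const_mul]
  refine integral_congr fun ξ hξ => ?_
  have hξ : 0 < ξ := lt_of_lt_of_le (lt_min hl one_pos) hξ.1
  rw [arcsineWeight, div_eq_inv_mul, Real.mul_rpow (inv_pos.2 hl).le hξ.le,
    show t - 1 / 2 = t + -(1 : ℝ) / 2 by ring, Real.rpow_add hξ]
  ring

lemma eta_half (hl0 : 0 < l) (hl1 : l ≤ 1) : eta l (1 / 2) = ((1 - l) / l) ^ ((1 : ℝ) / 2) := by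
  rw [eta, etaIntegral_eq hl0, sub_self]
  simp only [Real.rpow_zero, mul_one]
  rw [integral_one_sub_rpow (by norm_num), div_eq_mul_inv (1 - l),
    Real.mul_rpow (by linarith) (inv_pos.2 hl0).le]
  norm_num
  ring

lemma eta_pos (hl0 : 0 < l) (hl1 : l < 1) {t : ℝ} (ht : 0 < t) : 0 < eta l t :=
  mul_pos ht (etaIntegral_pos hl0 hl1 t)

lemma strictMonoOn_eta (hl0 : 0 < l) (hl1 : l < 1) : StrictMonoOn (eta l) (Ioi 0) :=
  fun _ _ _ hb hab => mul_lt_mul hab (monotone_etaIntegral hl0 hl1.le hab.le)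
    (etaIntegral_pos hl0 hl1 _) (le_of_lt hb)

lemma tendsto_eta_atTop (hl0 : 0 < l) (hl1 : l < 1) : Tendsto (eta l) atTop atTop := by
  refine tendsto_atTop_mono' _ ?_ (tendsto_id.atTop_mul_const (etaIntegral_pos hl0 hl1 0))
  filter_upwards [eventually_ge_atTop 0] with t ht
  exact mul_le_mul_of_nonneg_left (monotone_etaIntegral hl0 hl1.le ht) ht

lemma tendsto_eta_nhdsGT_zero (hl0 : 0 < l) (hl1 : l < 1) :
    Tendsto (eta l) (𝓝[>] 0) (𝓝 0) := by
  have hlin : Tendsto (fun t => t * etaIntegral l 1) (𝓝[>] 0) (𝓝 0) := by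
    have h : Tendsto (fun t : ℝ => t * etaIntegral l 1) (𝓝 0) (𝓝 (0 * etaIntegral l 1)) :=
      tendsto_id.mul_const _
    rw [zero_mul] at h
    exact h.mono_left nhdsWithin_le_nhds
  refine squeeze_zero' ?_ ?_ hlin
  · filter_upwards [self_mem_nhdsWithin] with t ht using (eta_pos hl0 hl1 ht).le
  · filter_upwards [Ioc_mem_nhdsGT one_pos] with t ht
    exact mul_le_mul_of_nonneg_left (monotone_etaIntegral hl0 hl1.le ht.2) ht.1.le

end Eta

lemma theta_pos {γ : ℝ} (hγ : γ ∈ Ioo (-1 : ℝ) 1) : 0 < theta γ :=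
  div_pos (by linarith [hγ.2]) (by linarith [hγ.1])

lemma strictAntiOn_theta : StrictAntiOn theta (Ioi (-1)) := by
  intro a ha b hb hab
  rw [theta, theta, div_lt_div_iff₀ (by linarith [mem_Ioi.1 hb]) (by linarith [mem_Ioi.1 ha])]
  nlinarith [mem_Ioi.1 ha]

lemma theta_eq_inv_sub_half {γ : ℝ} (hγ : γ + 1 ≠ 0) : theta γ = (γ + 1)⁻¹ - 1 / 2 := by
  rw [theta]
  field_simp
  ring

lemma theta_sub_half {γ : ℝ} (hγ : γ + 1 ≠ 0) : theta γ - 1 / 2 = -(γ / (γ + 1)) := by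
  rw [theta]
  field_simp
  ring

lemma tendsto_theta_nhdsGT_neg_one : Tendsto theta (𝓝[>] (-1)) atTop := by
  have hshift : Tendsto (· + 1) (𝓝[>] (-1 : ℝ)) (𝓝[>] 0) := by
    rw [show (0 : ℝ) = -1 + 1 by norm_num, ← Filter.map_add_right_nhdsGT]
    exact tendsto_map
  refine (tendsto_atTop_add_const_right _ (-(1 / 2))
    (tendsto_inv_nhdsGT_zero.comp hshift)).congr' ?_
  filter_upwards [self_mem_nhdsWithin] with γ hγ
  rw [theta_eq_inv_sub_half (by linarith [mem_Ioi.1 hγ])]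
  rfl

lemma tendsto_theta_nhdsLT_one : Tendsto theta (𝓝[<] 1) (𝓝[>] 0) := by
  refine tendsto_nhdsWithin_iff.2 ⟨?_, ?_⟩
  · have hcont : ContinuousAt theta 1 := by
      unfold theta
      exact ContinuousAt.div (by fun_prop) (by fun_prop) (by norm_num)
    simpa [theta] using hcont.tendsto.mono_left nhdsWithin_le_nhds
  · filter_upwards [Ioo_mem_nhdsLT (show (-1 : ℝ) < 1 by norm_num)] with γ hγ
    exact theta_pos hγ

lemma timeMapFormula_eq_eta {ap am γ : ℝ} (hap : 0 < ap) (ham : 0 < am) (hγ : γ + 1 ≠ 0) :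
    (1 - γ) / (2 * (γ + 1)) *
        ((ap + am) / ap) ^ ((1 - γ) / (2 * (γ + 1))) * (am / ap) ^ ((1 : ℝ) / 2) *
        ∫ ξ in (ap / (ap + am))..1, (1 - ξ) ^ (-(1 : ℝ) / 2) * ξ ^ (-(γ / (γ + 1))) =
      (am / ap) ^ ((1 : ℝ) / 2) * eta (ap / (ap + am)) (theta γ) := by
  rw [eta, etaIntegral_eq (by positivity), ← theta_sub_half hγ, inv_div, theta]
  ring

lemma div_eq_rpow_half_mul_eta_half {ap am : ℝ} (hap : 0 < ap) (ham : 0 < am) :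
    am / ap = (am / ap) ^ ((1 : ℝ) / 2) * eta (ap / (ap + am)) (1 / 2) := by
  have hl : (1 - ap / (ap + am)) / (ap / (ap + am)) = am / ap := by
    field_simp
    ring
  rw [eta_half (by positivity) ((div_le_one (by positivity)).2 (by linarith)), hl,
    ← Real.rpow_add (by positivity)]
  norm_num

end StepwiseWeight

open StepwiseWeight

/-- the function `K₀` is positive on `]-1,1[`, strictly decreasing,
with `K₀ → +∞` as `γ → -1⁺` and `K₀ → 0` as `γ → 1⁻`. -/
theorem stmt_9 (ap am : ℝ) (hap : 0 < ap) (ham : 0 < am)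
    (K₀ : ℝ → ℝ)
    (hK : ∀ γ ∈ Ioo (-1 : ℝ) 1, γ ≠ 0 →
      K₀ γ = (1 - γ) / (2 * (γ + 1)) *
        ((ap + am) / ap) ^ ((1 - γ) / (2 * (γ + 1))) * (am / ap) ^ ((1 : ℝ) / 2) *
        ∫ ξ in (ap / (ap + am))..1, (1 - ξ) ^ (-(1 : ℝ) / 2) * ξ ^ (-(γ / (γ + 1))))
    (hK0 : K₀ 0 = am / ap) :
    (∀ γ ∈ Ioo (-1 : ℝ) 1, 0 < K₀ γ) ∧
      StrictAntiOn K₀ (Ioo (-1 : ℝ) 1) ∧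
      Tendsto K₀ (𝓝[>] (-1 : ℝ)) atTop ∧
      Tendsto K₀ (𝓝[<] (1 : ℝ)) (𝓝 0) := by
  set l := ap / (ap + am)
  have hl0 : 0 < l := by positivity
  have hl1 : l < 1 := (div_lt_one (by positivity)).2 (by linarith)
  set s := (am / ap) ^ ((1 : ℝ) / 2)
  have hs : 0 < s := by positivity
  have hK' : ∀ γ ∈ Ioo (-1 : ℝ) 1, K₀ γ = s * eta l (theta γ) := by
    intro γ hγ
    rcases eq_or_ne γ 0 with rfl | hγ0
    · rw [hK0, show theta 0 = 1 / 2 by norm_num [theta]]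
      exact div_eq_rpow_half_mul_eta_half hap ham
    · rw [hK γ hγ hγ0]
      exact timeMapFormula_eq_eta hap ham (by linarith [hγ.1])
  refine ⟨fun γ hγ => ?_, fun a ha b hb hab => ?_, ?_, ?_⟩
  · rw [hK' γ hγ]
    exact mul_pos hs (eta_pos hl0 hl1 (theta_pos hγ))
  · rw [hK' a ha, hK' b hb]
    exact mul_lt_mul_of_pos_left (strictMonoOn_eta hl0 hl1 (theta_pos hb) (theta_pos ha)
      (strictAntiOn_theta ha.1 hb.1 hab)) hs
  · refine (((tendsto_eta_atTop hl0 hl1).comp tendsto_theta_nhdsGT_neg_one).const_mul_atTop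
      hs).congr' ?_
    filter_upwards [Ioo_mem_nhdsGT (show (-1 : ℝ) < 1 by norm_num)] with γ hγ
    exact (hK' γ hγ).symm
  · have hlim := ((tendsto_eta_nhdsGT_zero hl0 hl1).comp tendsto_theta_nhdsLT_one).const_mul s
    rw [mul_zero] at hlim
    refine hlim.congr' ?_
    filter_upwards [Ioo_mem_nhdsLT (show (-1 : ℝ) < 1 by norm_num)] with γ hγ
    exact (hK' γ hγ).symm
end

section
/- Let a₊, a₋ > 0, 0 < τ < T, and let a(t) = a₊ for t ∈ [0,τ[ and a(t) = -a₋ for t ∈ [τ,T[. Let g ∈ C¹(]0,+∞[) with g > 0 and g' > 0 on ]0,+∞[, and let φ : Ω → ℝ be a homeomorphism of an open interval Ω ∋ 0 onto ℝ with φ(0)=0 and sφ(s) > 0 for s ≠ 0. If u : [0,T] → ]0,+∞[ is a C¹ solution of (φ(u'))' + a(t)g(u) = 0 with Neumann boundary conditions u'(0) = u'(T) = 0 (or periodic conditions u(0)=u(T), u'(0)=u'(T)), then ∫₀ᵀ a(t) dt = a₊τ - a₋(T-τ) < 0. -/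
open Set MeasureTheory intervalIntegral Filter Topology

lemma stmt10_mono (Ω : Set ℝ) (hΩopen : IsOpen Ω) (hΩconn : Ω.OrdConnected) (h0Ω : (0:ℝ) ∈ Ω)
    (φ : ℝ → ℝ) (hφcont : ContinuousOn φ Ω) (hφinj : InjOn φ Ω)
    (hφ0 : φ 0 = 0) (hφsign : ∀ s ∈ Ω, s ≠ 0 → s * φ s > 0) :
    StrictMonoOn φ Ω := by
  obtain ⟨ε, hε, hball⟩ := Metric.isOpen_iff.1 hΩopen 0 h0Ω
  set ε₀ := ε/2 with hε0
  have hε₀pos : 0 < ε₀ := by positivity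
  have hmem : ∀ z : ℝ, |z| ≤ ε₀ → z ∈ Ω := by
    intro z hz
    apply hball
    simp only [Metric.mem_ball, Real.dist_eq, sub_zero]
    calc |z| ≤ ε₀ := hz
    _ < ε := by simp [hε0]; linarith
  have hφε₀ : 0 < φ ε₀ := by
    have := hφsign ε₀ (hmem ε₀ (by rw [abs_of_pos hε₀pos])) hε₀pos.ne'
    nlinarith
  intro x hx y hy hxy
  set A := min x (-ε₀) with hA
  set B := max y ε₀ with hB
  have hAΩ : A ∈ Ω := by
    rcases min_cases x (-ε₀) with ⟨h, _⟩ | ⟨h, _⟩ <;> rw [hA, h]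
    · exact hx
    · exact hmem _ (by rw [abs_of_neg (by linarith)]; linarith)
  have hBΩ : B ∈ Ω := by
    rcases max_cases y ε₀ with ⟨h, _⟩ | ⟨h, _⟩ <;> rw [hB, h]
    · exact hy
    · exact hmem _ (by rw [abs_of_pos hε₀pos])
  have hsub : Icc A B ⊆ Ω := hΩconn.out hAΩ hBΩ
  have hAB : A ≤ B := le_trans (min_le_right _ _) (le_trans (by linarith) (le_max_right y ε₀))
  have hmemI : ∀ z ∈ ({x, y, 0, ε₀} : Set ℝ), z ∈ Icc A B := by
    intro z hz
    simp only [mem_insert_iff, mem_singleton_iff] at hz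
    have h1 : A ≤ -ε₀ := min_le_right _ _
    have h2 : ε₀ ≤ B := le_max_right _ _
    have h3 : A ≤ x := min_le_left _ _
    have h4 : y ≤ B := le_max_left _ _
    rcases hz with rfl | rfl | rfl | rfl <;> constructor <;> linarith
  rcases ContinuousOn.strictMonoOn_of_injOn_Icc' hAB (hφcont.mono hsub) (hφinj.mono hsub) with hm | hm
  · exact hm (hmemI x (by simp)) (hmemI y (by simp)) hxy
  · exfalso
    have := hm (hmemI 0 (by simp)) (hmemI ε₀ (by simp)) hε₀pos
    rw [hφ0] at this
    linarith

lemma stmt10_psicont (Ω : Set ℝ) (hΩopen : IsOpen Ω)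
    (φ ψ : ℝ → ℝ) (hφm : StrictMonoOn φ Ω)
    (hψΩ : ∀ y, ψ y ∈ Ω) (hψφ : ∀ y, φ (ψ y) = y) (y₀ : ℝ) :
    ContinuousAt ψ y₀ := by
  rw [Metric.continuousAt_iff]
  intro ε' hε'
  set s₀ := ψ y₀ with hs₀
  obtain ⟨ε, hε, hball⟩ := Metric.isOpen_iff.1 hΩopen s₀ (hψΩ y₀)
  set r := min (ε/2) (ε'/2) with hr
  have hrpos : 0 < r := by positivity
  have hmem : ∀ z : ℝ, |z - s₀| ≤ r → z ∈ Ω := by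
    intro z hz
    apply hball
    simp only [Metric.mem_ball, Real.dist_eq]
    have : r < ε := lt_of_le_of_lt (min_le_left _ _) (by linarith)
    linarith
  have hmem₁ : s₀ - r ∈ Ω := hmem _ (by rw [show s₀ - r - s₀ = -r by ring, abs_neg, abs_of_pos hrpos])
  have hmem₂ : s₀ + r ∈ Ω := hmem _ (by rw [show s₀ + r - s₀ = r by ring, abs_of_pos hrpos])
  have h₁ : φ (s₀ - r) < y₀ := by
    have := hφm hmem₁ (hψΩ y₀) (by linarith)
    rwa [hψφ y₀] at this
  have h₂ : y₀ < φ (s₀ + r) := by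
    have := hφm (hψΩ y₀) hmem₂ (by linarith)
    rwa [hψφ y₀] at this
  refine ⟨min (φ (s₀ + r) - y₀) (y₀ - φ (s₀ - r)), lt_min (by linarith) (by linarith), ?_⟩
  intro y hy
  rw [Real.dist_eq] at hy
  have hy₁ : φ (s₀ - r) < y := by
    have := abs_lt.1 (lt_of_lt_of_le hy (min_le_right _ _))
    linarith [this.1]
  have hy₂ : y < φ (s₀ + r) := by
    have := abs_lt.1 (lt_of_lt_of_le hy (min_le_left _ _))
    linarith [this.2]
  have k₁ : s₀ - r < ψ y := by
    by_contra h
    push_neg at h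
    rcases eq_or_lt_of_le h with h | h
    · rw [← h, hψφ] at hy₁; exact lt_irrefl _ hy₁
    · have := hφm (hψΩ y) hmem₁ h
      rw [hψφ] at this; linarith
  have k₂ : ψ y < s₀ + r := by
    by_contra h
    push_neg at h
    rcases eq_or_lt_of_le h with h | h
    · rw [h, hψφ] at hy₂; exact lt_irrefl _ hy₂
    · have := hφm hmem₂ (hψΩ y) h
      rw [hψφ] at this; linarith
  rw [Real.dist_eq, abs_lt]
  have : r ≤ ε'/2 := min_le_right _ _
  constructor <;> [linarith; linarith]

set_option maxHeartbeats 4000000 in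
/-- necessary condition `∫₀ᵀ a < 0` for positive Neumann/periodic
solutions of `(φ(u'))' + a(t) g(u) = 0` with increasing `g`. -/
theorem stmt_10 (ap am τ T : ℝ) (hap : 0 < ap) (ham : 0 < am)
    (hτ : 0 < τ) (hτT : τ < T)
    (a : ℝ → ℝ)
    (ha : ∀ t, (t ∈ Ico 0 τ → a t = ap) ∧ (t ∈ Ico τ T → a t = -am))
    (Ω : Set ℝ) (hΩopen : IsOpen Ω) (hΩconn : Ω.OrdConnected) (h0Ω : (0 : ℝ) ∈ Ω)
    (φ : ℝ → ℝ) (hφcont : ContinuousOn φ Ω)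
    (hφinj : InjOn φ Ω) (hφsurj : SurjOn φ Ω univ)
    (hφ0 : φ 0 = 0) (hφsign : ∀ s ∈ Ω, s ≠ 0 → s * φ s > 0)
    (g g' : ℝ → ℝ)
    (hgpos : ∀ x : ℝ, 0 < x → 0 < g x)
    (hg' : ∀ x : ℝ, 0 < x → HasDerivAt g (g' x) x)
    (hg'pos : ∀ x : ℝ, 0 < x → 0 < g' x)
    (u u' : ℝ → ℝ)
    (hupos : ∀ t ∈ Icc 0 T, 0 < u t)
    (hu : ∀ t ∈ Icc 0 T, HasDerivAt u (u' t) t)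
    (hu'Ω : ∀ t ∈ Icc 0 T, u' t ∈ Ω)
    (heq : ∀ t ∈ Icc 0 T, t ≠ τ →
      HasDerivAt (fun s => φ (u' s)) (-(a t * g (u t))) t)
    (hbc : (u' 0 = 0 ∧ u' T = 0) ∨ (u 0 = u T ∧ u' 0 = u' T)) :
    (∫ t in (0 : ℝ)..T, a t) = ap * τ - am * (T - τ) ∧
      ap * τ - am * (T - τ) < 0 := by
  -- Part 1 : the value of the integral
  have hint : (∫ t in (0 : ℝ)..T, a t) = ap * τ - am * (T - τ) := by
    have hae1 : a =ᵐ[volume.restrict (Ioc (0:ℝ) τ)] (fun _ => ap) := by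
      have hz : volume ({τ} : Set ℝ) = 0 := measure_singleton τ
      rw [Filter.EventuallyEq, ae_restrict_iff' measurableSet_Ioc]
      refine Filter.Eventually.mono (measure_eq_zero_iff_ae_notMem.1 hz) ?_
      intro t ht hmem
      simp only [mem_singleton_iff] at ht
      exact (ha t).1 ⟨le_of_lt hmem.1, lt_of_le_of_ne hmem.2 ht⟩
    have hae2 : a =ᵐ[volume.restrict (Ioc τ T)] (fun _ => -am) := by
      have hz : volume ({T} : Set ℝ) = 0 := measure_singleton T
      rw [Filter.EventuallyEq, ae_restrict_iff' measurableSet_Ioc]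
      refine Filter.Eventually.mono (measure_eq_zero_iff_ae_notMem.1 hz) ?_
      intro t ht hmem
      simp only [mem_singleton_iff] at ht
      exact (ha t).2 ⟨le_of_lt hmem.1, lt_of_le_of_ne hmem.2 ht⟩
    have hi1 : IntervalIntegrable a volume 0 τ := by
      rw [intervalIntegrable_iff_integrableOn_Ioc_of_le hτ.le]
      exact (integrableOn_const measure_Ioc_lt_top.ne).congr hae1.symm
    have hi2 : IntervalIntegrable a volume τ T := by
      rw [intervalIntegrable_iff_integrableOn_Ioc_of_le hτT.le]
      exact (integrableOn_const measure_Ioc_lt_top.ne).congr hae2.symm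
    have e1 : (∫ t in (0:ℝ)..τ, a t) = ap * τ := by
      rw [intervalIntegral.integral_of_le hτ.le, integral_congr_ae hae1]
      rw [setIntegral_const, measureReal_def, Real.volume_Ioc, smul_eq_mul,
        ENNReal.toReal_ofReal (by linarith : (0:ℝ) ≤ τ - 0)]
      ring
    have e2 : (∫ t in τ..T, a t) = -(am * (T - τ)) := by
      rw [intervalIntegral.integral_of_le hτT.le, integral_congr_ae hae2]
      rw [setIntegral_const, measureReal_def, Real.volume_Ioc, smul_eq_mul,
        ENNReal.toReal_ofReal (by linarith : (0:ℝ) ≤ T - τ)]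
      ring
    rw [← intervalIntegral.integral_add_adjacent_intervals hi1 hi2, e1, e2]
    ring
  refine ⟨hint, ?_⟩
  -- Part 2 : the sign condition
  -- basic memberships
  have hτmem : τ ∈ Icc (0:ℝ) T := ⟨hτ.le, hτT.le⟩
  have h0mem : (0:ℝ) ∈ Icc (0:ℝ) T := ⟨le_refl 0, by linarith⟩
  have hTmem : T ∈ Icc (0:ℝ) T := ⟨by linarith, le_refl T⟩
  have hIcoIcc : Ico (0:ℝ) τ ⊆ Icc 0 T := fun t ht => ⟨ht.1, by linarith [ht.2]⟩
  have hIocIcc : Ioc τ T ⊆ Icc 0 T := fun t ht => ⟨by linarith [ht.1], ht.2⟩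
  have hgu_pos : ∀ t ∈ Icc (0:ℝ) T, 0 < g (u t) := fun t ht => hgpos _ (hupos t ht)
  -- sign of s * φ s for s = u' t
  have hw : ∀ t ∈ Icc (0:ℝ) T, 0 ≤ u' t * φ (u' t) := by
    intro t ht
    rcases eq_or_ne (u' t) 0 with h | h
    · simp [h, hφ0]
    · exact (hφsign _ (hu'Ω t ht) h).le
  -- φ is strictly monotone, with continuous inverse ψ
  have hφm : StrictMonoOn φ Ω := stmt10_mono Ω hΩopen hΩconn h0Ω φ hφcont hφinj hφ0 hφsign
  choose ψ hψΩ hψφ using fun y : ℝ => hφsurj (mem_univ y)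
  have hψcont : ∀ y, ContinuousAt ψ y := stmt10_psicont Ω hΩopen φ ψ hφm hψΩ hψφ
  have hψv : ∀ t ∈ Icc (0:ℝ) T, ψ (φ (u' t)) = u' t :=
    fun t ht => hφinj (hψΩ _) (hu'Ω t ht) (hψφ _)
  -- the quotient F = φ(u') / g(u) and its derivative
  set F : ℝ → ℝ := fun t => φ (u' t) / g (u t) with hFdef
  have hgud : ∀ t ∈ Icc (0:ℝ) T, HasDerivAt (fun s => g (u s)) (g' (u t) * u' t) t :=
    fun t ht => (hg' (u t) (hupos t ht)).comp t (hu t ht)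
  set D : ℝ → ℝ := fun t =>
    (-(a t * g (u t)) * g (u t) - φ (u' t) * (g' (u t) * u' t)) / g (u t) ^ 2 with hDdef
  have hFd : ∀ t ∈ Icc (0:ℝ) T, t ≠ τ → HasDerivAt F (D t) t :=
    fun t ht htne => (heq t ht htne).div (hgud t ht) (hgu_pos t ht).ne'
  -- numerator sign
  have hnum : ∀ t ∈ Icc (0:ℝ) T, 0 ≤ φ (u' t) * (g' (u t) * u' t) := by
    intro t ht
    have h1 := hw t ht
    have h2 := (hg'pos (u t) (hupos t ht)).le
    nlinarith
  -- continuity of g ∘ u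
  have hguc : ContinuousOn (fun t => g (u t)) (Icc 0 T) := fun t ht =>
    ((hg' (u t) (hupos t ht)).continuousAt.comp (hu t ht).continuousAt).continuousWithinAt
  -- global bounds on g ∘ u
  obtain ⟨tM, htMmem, htM⟩ := isCompact_Icc.exists_isMaxOn (nonempty_Icc.2 (by linarith)) hguc
  obtain ⟨tm, htmmem, htm⟩ := isCompact_Icc.exists_isMinOn (nonempty_Icc.2 (by linarith)) hguc
  set M := g (u tM) with hMdef
  set mg := g (u tm) with hmgdef
  have hM : ∀ t ∈ Icc (0:ℝ) T, g (u t) ≤ M := fun t ht => htM ht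
  have hmg : ∀ t ∈ Icc (0:ℝ) T, mg ≤ g (u t) := fun t ht => htm ht
  have hmgpos : 0 < mg := hgu_pos tm htmmem
  have hMpos : 0 < M := lt_of_lt_of_le hmgpos (le_trans (hmg tM htMmem) (le_refl _))
  -- G = F + ap * t is antitone on [0, τ)
  set G : ℝ → ℝ := fun t => F t + ap * t with hGdef
  have hGd : ∀ t ∈ Icc (0:ℝ) T, t ≠ τ → HasDerivAt G (D t + ap) t := by
    intro t ht htne
    exact (hFd t ht htne).add (by simpa using (hasDerivAt_id t).const_mul ap)
  have hGanti : AntitoneOn G (Ico 0 τ) := by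
    apply antitoneOn_of_hasDerivWithinAt_nonpos (convex_Ico 0 τ)
      (f' := fun t => D t + ap)
    · intro t ht
      exact ((hGd t (hIcoIcc ht) (ne_of_lt ht.2)).continuousAt).continuousWithinAt
    · intro t ht
      rw [interior_Ico] at ht
      exact (hGd t (hIcoIcc ⟨ht.1.le, ht.2⟩) (ne_of_lt ht.2)).hasDerivWithinAt
    · intro t ht
      rw [interior_Ico] at ht
      have htI : t ∈ Icc (0:ℝ) T := hIcoIcc ⟨ht.1.le, ht.2⟩
      have hat : a t = ap := (ha t).1 ⟨ht.1.le, ht.2⟩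
      have hm : 0 < g (u t) := hgu_pos t htI
      have hX := hnum t htI
      have key : D t + ap = -(φ (u' t) * (g' (u t) * u' t)) / g (u t) ^ 2 := by
        rw [hDdef]
        simp only [hat]
        field_simp
        ring
      rw [key]
      apply div_nonpos_of_nonpos_of_nonneg (by linarith) (by positivity)
  -- H = F - am * t is antitone on (τ, T]
  set H : ℝ → ℝ := fun t => F t - am * t with hHdef
  have hHd : ∀ t ∈ Icc (0:ℝ) T, t ≠ τ → HasDerivAt H (D t - am) t := by
    intro t ht htne
    exact (hFd t ht htne).sub (by simpa using (hasDerivAt_id t).const_mul am)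
  have hHanti : AntitoneOn H (Ioc τ T) := by
    apply antitoneOn_of_hasDerivWithinAt_nonpos (convex_Ioc τ T)
      (f' := fun t => D t - am)
    · intro t ht
      exact ((hHd t (hIocIcc ht) (ne_of_gt ht.1)).continuousAt).continuousWithinAt
    · intro t ht
      rw [interior_Ioc] at ht
      exact (hHd t (hIocIcc ⟨ht.1, ht.2.le⟩) (ne_of_gt ht.1)).hasDerivWithinAt
    · intro t ht
      rw [interior_Ioc] at ht
      have htI : t ∈ Icc (0:ℝ) T := hIocIcc ⟨ht.1, ht.2.le⟩
      have hat : a t = -am := (ha t).2 ⟨ht.1.le, ht.2⟩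
      have hm : 0 < g (u t) := hgu_pos t htI
      have hX := hnum t htI
      have key : D t - am = -(φ (u' t) * (g' (u t) * u' t)) / g (u t) ^ 2 := by
        rw [hDdef]
        simp only [hat]
        field_simp
        ring
      rw [key]
      apply div_nonpos_of_nonpos_of_nonneg (by linarith) (by positivity)
  -- v = φ ∘ u' : strict antitone on [0,τ), monotone on (τ,T], with linear bounds
  have hvstrict : StrictAntiOn (fun t => φ (u' t)) (Ico 0 τ) := by
    apply strictAntiOn_of_hasDerivWithinAt_neg (convex_Ico 0 τ)
      (f' := fun t => -(a t * g (u t)))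
    · intro t ht
      exact (heq t (hIcoIcc ht) (ne_of_lt ht.2)).continuousAt.continuousWithinAt
    · intro t ht
      rw [interior_Ico] at ht
      exact (heq t (hIcoIcc ⟨ht.1.le, ht.2⟩) (ne_of_lt ht.2)).hasDerivWithinAt
    · intro t ht
      rw [interior_Ico] at ht
      have hat : a t = ap := (ha t).1 ⟨ht.1.le, ht.2⟩
      have hm := hgu_pos t (hIcoIcc ⟨ht.1.le, ht.2⟩)
      rw [hat]
      nlinarith
  have hvmono2 : MonotoneOn (fun t => φ (u' t) + ap * M * t) (Ico 0 τ) := by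
    apply monotoneOn_of_hasDerivWithinAt_nonneg (convex_Ico 0 τ)
      (f' := fun t => -(a t * g (u t)) + ap * M)
    · intro t ht
      exact (((heq t (hIcoIcc ht) (ne_of_lt ht.2)).add
        (by simpa using (hasDerivAt_id t).const_mul (ap * M))).continuousAt).continuousWithinAt
    · intro t ht
      rw [interior_Ico] at ht
      exact ((heq t (hIcoIcc ⟨ht.1.le, ht.2⟩) (ne_of_lt ht.2)).add
        (by simpa using (hasDerivAt_id t).const_mul (ap * M))).hasDerivWithinAt
    · intro t ht
      rw [interior_Ico] at ht
      have hat : a t = ap := (ha t).1 ⟨ht.1.le, ht.2⟩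
      have hm := hM t (hIcoIcc ⟨ht.1.le, ht.2⟩)
      rw [hat]
      nlinarith
  have hvbdL : ∀ t ∈ Ico (0:ℝ) τ, |φ (u' t)| ≤ |φ (u' 0)| + ap * M * τ := by
    intro t ht
    have h0' : (0:ℝ) ∈ Ico (0:ℝ) τ := ⟨le_refl 0, hτ⟩
    have hub : φ (u' t) ≤ φ (u' 0) := (hvstrict.antitoneOn) h0' ht ht.1
    have hlb : φ (u' 0) + ap * M * 0 ≤ φ (u' t) + ap * M * t := hvmono2 h0' ht ht.1
    have hapM : 0 < ap * M := mul_pos hap hMpos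
    have h1 : 0 ≤ ap * M * t := by nlinarith [ht.1]
    have h2 : ap * M * t ≤ ap * M * τ := by nlinarith [ht.2]
    rw [abs_le]
    constructor
    · nlinarith [neg_abs_le (φ (u' 0))]
    · nlinarith [le_abs_self (φ (u' 0))]
  have hFbdL : ∀ t ∈ Ico (0:ℝ) τ, -((|φ (u' 0)| + ap * M * τ)/mg) ≤ F t := by
    intro t ht
    have habs : |F t| ≤ (|φ (u' 0)| + ap * M * τ)/mg := by
      simp only [hFdef, abs_div]
      apply div_le_div₀ (le_trans (abs_nonneg _) (hvbdL t ht)) (hvbdL t ht) hmgpos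
      rw [abs_of_pos (hgu_pos t (hIcoIcc ht))]
      exact hmg t (hIcoIcc ht)
    linarith [neg_abs_le (F t), abs_le.1 habs]
  have hGbddL : BddBelow (G '' Ioo 0 τ) := by
    refine ⟨-((|φ (u' 0)| + ap * M * τ)/mg), ?_⟩
    rintro x ⟨t, ht, rfl⟩
    have h1 := hFbdL t ⟨ht.1.le, ht.2⟩
    have h2 : 0 ≤ ap * t := by nlinarith [ht.1]
    simp only [hGdef]
    linarith
  have hGtend : Tendsto G (𝓝[<] τ) (𝓝 (sInf (G '' Ioo 0 τ))) :=
    AntitoneOn.tendsto_nhdsWithin_Ioo_left ⟨τ/2, by constructor <;> linarith⟩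
      (hGanti.mono Ioo_subset_Ico_self) hGbddL
  have hLGle : ∀ t ∈ Ioo (0:ℝ) τ, sInf (G '' Ioo 0 τ) ≤ G t :=
    fun t ht => csInf_le hGbddL (mem_image_of_mem _ ht)
  have hFtendL : Tendsto F (𝓝[<] τ) (𝓝 (sInf (G '' Ioo 0 τ) - ap * τ)) := by
    have h2 : Tendsto (fun t => G t - ap * t) (𝓝[<] τ) (𝓝 (sInf (G '' Ioo 0 τ) - ap * τ)) :=
      hGtend.sub (((continuous_const.mul continuous_id).tendsto τ).mono_left nhdsWithin_le_nhds)
    have e : (fun t => G t - ap * t) = F := by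
      funext t; simp only [hGdef]; ring
    rwa [e] at h2
  -- right side of τ
  have hvmonoR : MonotoneOn (fun t => φ (u' t)) (Ioc τ T) := by
    apply monotoneOn_of_hasDerivWithinAt_nonneg (convex_Ioc τ T)
      (f' := fun t => -(a t * g (u t)))
    · intro t ht
      exact (heq t (hIocIcc ht) (ne_of_gt ht.1)).continuousAt.continuousWithinAt
    · intro t ht
      rw [interior_Ioc] at ht
      exact (heq t (hIocIcc ⟨ht.1, ht.2.le⟩) (ne_of_gt ht.1)).hasDerivWithinAt
    · intro t ht
      rw [interior_Ioc] at ht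
      have hat : a t = -am := (ha t).2 ⟨ht.1.le, ht.2⟩
      have hm := hgu_pos t (hIocIcc ⟨ht.1, ht.2.le⟩)
      rw [hat]
      nlinarith
  have hvanti2R : AntitoneOn (fun t => φ (u' t) - am * M * t) (Ioc τ T) := by
    apply antitoneOn_of_hasDerivWithinAt_nonpos (convex_Ioc τ T)
      (f' := fun t => -(a t * g (u t)) - am * M)
    · intro t ht
      exact (((heq t (hIocIcc ht) (ne_of_gt ht.1)).sub
        (by simpa using (hasDerivAt_id t).const_mul (am * M))).continuousAt).continuousWithinAt
    · intro t ht
      rw [interior_Ioc] at ht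
      exact ((heq t (hIocIcc ⟨ht.1, ht.2.le⟩) (ne_of_gt ht.1)).sub
        (by simpa using (hasDerivAt_id t).const_mul (am * M))).hasDerivWithinAt
    · intro t ht
      rw [interior_Ioc] at ht
      have hat : a t = -am := (ha t).2 ⟨ht.1.le, ht.2⟩
      have hm := hM t (hIocIcc ⟨ht.1, ht.2.le⟩)
      have hm2 := hgu_pos t (hIocIcc ⟨ht.1, ht.2.le⟩)
      rw [hat]
      nlinarith
  have hvbdR : ∀ t ∈ Ioc τ T, |φ (u' t)| ≤ |φ (u' T)| + am * M * T := by
    intro t ht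
    have hT' : T ∈ Ioc τ T := ⟨hτT, le_refl T⟩
    have hub : φ (u' t) ≤ φ (u' T) := hvmonoR ht hT' ht.2
    have hlb : φ (u' T) - am * M * T ≤ φ (u' t) - am * M * t := hvanti2R ht hT' ht.2
    have hamM : 0 < am * M := mul_pos ham hMpos
    have h1 : 0 ≤ am * M * t := by nlinarith [ht.1]
    have h2 : am * M * t ≤ am * M * T := by nlinarith [ht.2]
    rw [abs_le]
    constructor
    · nlinarith [neg_abs_le (φ (u' T))]
    · nlinarith [le_abs_self (φ (u' T))]
  have hFbdR : ∀ t ∈ Ioc τ T, F t ≤ (|φ (u' T)| + am * M * T)/mg := by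
    intro t ht
    have habs : |F t| ≤ (|φ (u' T)| + am * M * T)/mg := by
      simp only [hFdef, abs_div]
      apply div_le_div₀ (le_trans (abs_nonneg _) (hvbdR t ht)) (hvbdR t ht) hmgpos
      rw [abs_of_pos (hgu_pos t (hIocIcc ht))]
      exact hmg t (hIocIcc ht)
    linarith [le_abs_self (F t)]
  have hHbddR : BddAbove (H '' Ioo τ T) := by
    refine ⟨(|φ (u' T)| + am * M * T)/mg, ?_⟩
    rintro x ⟨t, ht, rfl⟩
    have h1 := hFbdR t ⟨ht.1, ht.2.le⟩
    have h2 : 0 ≤ am * t := by nlinarith [ht.1]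
    simp only [hHdef]
    linarith
  have hHtend : Tendsto H (𝓝[>] τ) (𝓝 (sSup (H '' Ioo τ T))) :=
    AntitoneOn.tendsto_nhdsWithin_Ioo_right ⟨(τ+T)/2, by constructor <;> linarith⟩
      (hHanti.mono Ioo_subset_Ioc_self) hHbddR
  have hLHge : ∀ t ∈ Ioo τ T, H t ≤ sSup (H '' Ioo τ T) :=
    fun t ht => le_csSup hHbddR (mem_image_of_mem _ ht)
  have hFtendR : Tendsto F (𝓝[>] τ) (𝓝 (sSup (H '' Ioo τ T) + am * τ)) := by
    have h2 : Tendsto (fun t => H t + am * t) (𝓝[>] τ) (𝓝 (sSup (H '' Ioo τ T) + am * τ)) :=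
      hHtend.add (((continuous_const.mul continuous_id).tendsto τ).mono_left nhdsWithin_le_nhds)
    have e : (fun t => H t + am * t) = F := by
      funext t; simp only [hHdef]; ring
    rwa [e] at h2
  -- matching of the one-sided limits of F at τ
  have hIooL_mem : Ioo (0:ℝ) τ ∈ 𝓝[<] τ := Ioo_mem_nhdsLT_of_mem ⟨hτ, le_refl τ⟩
  have hIooR_mem : Ioo τ T ∈ 𝓝[>] τ := Ioo_mem_nhdsGT_of_mem ⟨le_refl τ, hτT⟩
  have hgucτ : Tendsto (fun t => g (u t)) (𝓝 τ) (𝓝 (g (u τ))) :=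
    ((hg' (u τ) (hupos τ hτmem)).continuousAt.comp (hu τ hτmem).continuousAt).tendsto
  have hFLval : sInf (G '' Ioo 0 τ) - ap * τ = F τ := by
    set FL := sInf (G '' Ioo 0 τ) - ap * τ with hFL
    have hvtendL : Tendsto (fun t => φ (u' t)) (𝓝[<] τ) (𝓝 (FL * g (u τ))) := by
      have h1 : Tendsto (fun t => F t * g (u t)) (𝓝[<] τ) (𝓝 (FL * g (u τ))) :=
        hFtendL.mul (hgucτ.mono_left nhdsWithin_le_nhds)
      apply h1.congr'
      filter_upwards [hIooL_mem] with t ht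
      simp only [hFdef]
      exact div_mul_cancel₀ _ (hgu_pos t (hIcoIcc ⟨ht.1.le, ht.2⟩)).ne'
    have hu'tendL : Tendsto u' (𝓝[<] τ) (𝓝 (ψ (FL * g (u τ)))) := by
      have h1 := ((hψcont (FL * g (u τ))).tendsto).comp hvtendL
      apply h1.congr'
      filter_upwards [hIooL_mem] with t ht
      exact hψv t (hIcoIcc ⟨ht.1.le, ht.2⟩)
    have hDL : HasDerivWithinAt u (ψ (FL * g (u τ))) (Iic τ) τ := by
      apply hasDerivWithinAt_Iic_of_tendsto_deriv (s := Ioo 0 τ)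
      · exact fun t ht => (hu t (hIcoIcc ⟨ht.1.le, ht.2⟩)).differentiableAt.differentiableWithinAt
      · exact (hu τ hτmem).continuousAt.continuousWithinAt
      · exact hIooL_mem
      · apply hu'tendL.congr'
        filter_upwards [hIooL_mem] with t ht
        exact ((hu t (hIcoIcc ⟨ht.1.le, ht.2⟩)).deriv).symm
    have hu'τL : u' τ = ψ (FL * g (u τ)) := by
      have hud : UniqueDiffWithinAt ℝ (Iic τ) τ := (uniqueDiffOn_Iic τ) τ (mem_Iic.2 le_rfl)
      have k1 := hDL.derivWithin hud
      have k2 := ((hu τ hτmem).hasDerivWithinAt (s := Iic τ)).derivWithin hud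
      rw [← k1, ← k2]
    have hφeq : φ (u' τ) = FL * g (u τ) := by rw [hu'τL, hψφ]
    simp only [hFdef]
    rw [hφeq, mul_div_assoc, div_self (hgu_pos τ hτmem).ne', mul_one]
  have hFRval : sSup (H '' Ioo τ T) + am * τ = F τ := by
    set FR := sSup (H '' Ioo τ T) + am * τ with hFR
    have hvtendR : Tendsto (fun t => φ (u' t)) (𝓝[>] τ) (𝓝 (FR * g (u τ))) := by
      have h1 : Tendsto (fun t => F t * g (u t)) (𝓝[>] τ) (𝓝 (FR * g (u τ))) :=
        hFtendR.mul (hgucτ.mono_left nhdsWithin_le_nhds)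
      apply h1.congr'
      filter_upwards [hIooR_mem] with t ht
      simp only [hFdef]
      exact div_mul_cancel₀ _ (hgu_pos t (hIocIcc ⟨ht.1, ht.2.le⟩)).ne'
    have hu'tendR : Tendsto u' (𝓝[>] τ) (𝓝 (ψ (FR * g (u τ)))) := by
      have h1 := ((hψcont (FR * g (u τ))).tendsto).comp hvtendR
      apply h1.congr'
      filter_upwards [hIooR_mem] with t ht
      exact hψv t (hIocIcc ⟨ht.1, ht.2.le⟩)
    have hDR : HasDerivWithinAt u (ψ (FR * g (u τ))) (Ici τ) τ := by
      apply hasDerivWithinAt_Ici_of_tendsto_deriv (s := Ioo τ T)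
      · exact fun t ht => (hu t (hIocIcc ⟨ht.1, ht.2.le⟩)).differentiableAt.differentiableWithinAt
      · exact (hu τ hτmem).continuousAt.continuousWithinAt
      · exact hIooR_mem
      · apply hu'tendR.congr'
        filter_upwards [hIooR_mem] with t ht
        exact ((hu t (hIocIcc ⟨ht.1, ht.2.le⟩)).deriv).symm
    have hu'τR : u' τ = ψ (FR * g (u τ)) := by
      have hud : UniqueDiffWithinAt ℝ (Ici τ) τ := (uniqueDiffOn_Ici τ) τ (mem_Ici.2 le_rfl)
      have k1 := hDR.derivWithin hud
      have k2 := ((hu τ hτmem).hasDerivWithinAt (s := Ici τ)).derivWithin hud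
      rw [← k1, ← k2]
    have hφeq : φ (u' τ) = FR * g (u τ) := by rw [hu'τR, hψφ]
    simp only [hFdef]
    rw [hφeq, mul_div_assoc, div_self (hgu_pos τ hτmem).ne', mul_one]
  -- strict monotonicity of g
  have hgm : StrictMonoOn g (Ioi 0) := by
    apply strictMonoOn_of_hasDerivWithinAt_pos (convex_Ioi 0) (f' := g')
    · exact fun x hx => (hg' x hx).continuousAt.continuousWithinAt
    · intro x hx; rw [interior_Ioi] at hx; exact (hg' x hx).hasDerivWithinAt
    · intro x hx; rw [interior_Ioi] at hx; exact hg'pos x hx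
  -- the key strict estimate on a subinterval of (0, τ)
  have main_est : ∀ α β c₁ : ℝ, 0 < α → α < β → β < τ → 0 < c₁ →
      ((∀ t ∈ Icc α β, c₁ ≤ φ (u' t)) ∨ (∀ t ∈ Icc α β, φ (u' t) ≤ -c₁)) →
      ∃ δ : ℝ, 0 < δ ∧ F β ≤ F α - ap * (β - α) - δ := by
    intro α β c₁ hα hαβ hβτ hc₁ hcase
    have hsubI : Icc α β ⊆ Icc 0 T := fun t ht => ⟨by linarith [ht.1], by linarith [ht.2]⟩
    have hsubIco : Icc α β ⊆ Ico 0 τ := fun t ht => ⟨by linarith [ht.1], by linarith [ht.2]⟩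
    have hne : ∀ t ∈ Icc α β, t ≠ τ := fun t ht => ne_of_lt (by linarith [ht.2])
    have hαmem : α ∈ Icc α β := left_mem_Icc.2 hαβ.le
    have hβmem : β ∈ Icc α β := right_mem_Icc.2 hαβ.le
    rcases hcase with hcase | hcase
    · -- u' > 0 on [α, β]
      have hu'pos : ∀ t ∈ Icc α β, 0 < u' t := by
        intro t ht
        have h1 : 0 < φ (u' t) := lt_of_lt_of_le hc₁ (hcase t ht)
        have h2 := hw t (hsubI ht)
        rcases lt_trichotomy (u' t) 0 with h | h | h
        · nlinarith
        · rw [h, hφ0] at h1; linarith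
        · exact h
      have humono : StrictMonoOn u (Icc α β) := by
        apply strictMonoOn_of_hasDerivWithinAt_pos (convex_Icc α β) (f' := u')
        · exact fun t ht => (hu t (hsubI ht)).continuousAt.continuousWithinAt
        · intro t ht; rw [interior_Icc] at ht
          exact (hu t (hsubI (Ioo_subset_Icc_self ht))).hasDerivWithinAt
        · intro t ht; rw [interior_Icc] at ht; exact hu'pos t (Ioo_subset_Icc_self ht)
      have hQd : ∀ t ∈ Icc α β,
          HasDerivAt (fun s => F s + ap * s - c₁ * (g (u s))⁻¹)
            (D t + ap - c₁ * (-(g' (u t) * u' t) / g (u t) ^ 2)) t := by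
        intro t ht
        have h1 := hFd t (hsubI ht) (hne t ht)
        have h2 : HasDerivAt (fun s => ap * s) ap t := by
          simpa using (hasDerivAt_id t).const_mul ap
        have h3 : HasDerivAt (fun s => (g (u s))⁻¹) (-(g' (u t) * u' t) / g (u t) ^ 2) t :=
          (hgud t (hsubI ht)).inv (hgu_pos t (hsubI ht)).ne'
        exact (h1.add h2).sub (h3.const_mul c₁)
      have hQanti : AntitoneOn (fun s => F s + ap * s - c₁ * (g (u s))⁻¹) (Icc α β) := by
        apply antitoneOn_of_hasDerivWithinAt_nonpos (convex_Icc α β)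
          (f' := fun t => D t + ap - c₁ * (-(g' (u t) * u' t) / g (u t) ^ 2))
        · exact fun t ht => (hQd t ht).continuousAt.continuousWithinAt
        · intro t ht; rw [interior_Icc] at ht
          exact (hQd t (Ioo_subset_Icc_self ht)).hasDerivWithinAt
        · intro t ht
          rw [interior_Icc] at ht
          have htm := Ioo_subset_Icc_self ht
          have htI := hsubI htm
          have hat : a t = ap := (ha t).1 (hsubIco htm)
          have hm := hgu_pos t htI
          have key : D t + ap - c₁ * (-(g' (u t) * u' t) / g (u t) ^ 2)
              = (c₁ - φ (u' t)) * (g' (u t) * u' t) / g (u t) ^ 2 := by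
            simp only [hDdef, hat]
            field_simp
            ring
          rw [key]
          apply div_nonpos_of_nonpos_of_nonneg _ (by positivity)
          have h1 : c₁ - φ (u' t) ≤ 0 := by linarith [hcase t htm]
          have h2 : 0 ≤ g' (u t) * u' t :=
            le_of_lt (mul_pos (hg'pos _ (hupos t htI)) (hu'pos t htm))
          exact mul_nonpos_of_nonpos_of_nonneg h1 h2
      have hQba : F β + ap * β - c₁ * (g (u β))⁻¹ ≤ F α + ap * α - c₁ * (g (u α))⁻¹ :=
        hQanti hαmem hβmem hαβ.le
      have hguab : g (u α) < g (u β) :=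
        hgm (hupos α (hsubI hαmem)) (hupos β (hsubI hβmem)) (humono hαmem hβmem hαβ)
      have hinv : (g (u β))⁻¹ < (g (u α))⁻¹ := by
        rw [inv_lt_inv₀ (hgu_pos β (hsubI hβmem)) (hgu_pos α (hsubI hαmem))]
        exact hguab
      refine ⟨c₁ * ((g (u α))⁻¹ - (g (u β))⁻¹), by nlinarith, by nlinarith⟩
    · -- u' < 0 on [α, β]
      have hu'neg : ∀ t ∈ Icc α β, u' t < 0 := by
        intro t ht
        have h1 : φ (u' t) < 0 := lt_of_le_of_lt (hcase t ht) (by linarith)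
        have h2 := hw t (hsubI ht)
        rcases lt_trichotomy (u' t) 0 with h | h | h
        · exact h
        · rw [h, hφ0] at h1; linarith
        · nlinarith
      have huanti : StrictAntiOn u (Icc α β) := by
        apply strictAntiOn_of_hasDerivWithinAt_neg (convex_Icc α β) (f' := u')
        · exact fun t ht => (hu t (hsubI ht)).continuousAt.continuousWithinAt
        · intro t ht; rw [interior_Icc] at ht
          exact (hu t (hsubI (Ioo_subset_Icc_self ht))).hasDerivWithinAt
        · intro t ht; rw [interior_Icc] at ht; exact hu'neg t (Ioo_subset_Icc_self ht)
      have hQd : ∀ t ∈ Icc α β,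
          HasDerivAt (fun s => F s + ap * s + c₁ * (g (u s))⁻¹)
            (D t + ap + c₁ * (-(g' (u t) * u' t) / g (u t) ^ 2)) t := by
        intro t ht
        have h1 := hFd t (hsubI ht) (hne t ht)
        have h2 : HasDerivAt (fun s => ap * s) ap t := by
          simpa using (hasDerivAt_id t).const_mul ap
        have h3 : HasDerivAt (fun s => (g (u s))⁻¹) (-(g' (u t) * u' t) / g (u t) ^ 2) t :=
          (hgud t (hsubI ht)).inv (hgu_pos t (hsubI ht)).ne'
        exact (h1.add h2).add (h3.const_mul c₁)
      have hQanti : AntitoneOn (fun s => F s + ap * s + c₁ * (g (u s))⁻¹) (Icc α β) := by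
        apply antitoneOn_of_hasDerivWithinAt_nonpos (convex_Icc α β)
          (f' := fun t => D t + ap + c₁ * (-(g' (u t) * u' t) / g (u t) ^ 2))
        · exact fun t ht => (hQd t ht).continuousAt.continuousWithinAt
        · intro t ht; rw [interior_Icc] at ht
          exact (hQd t (Ioo_subset_Icc_self ht)).hasDerivWithinAt
        · intro t ht
          rw [interior_Icc] at ht
          have htm := Ioo_subset_Icc_self ht
          have htI := hsubI htm
          have hat : a t = ap := (ha t).1 (hsubIco htm)
          have hm := hgu_pos t htI
          have key : D t + ap + c₁ * (-(g' (u t) * u' t) / g (u t) ^ 2)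
              = -((φ (u' t) + c₁) * (g' (u t) * u' t)) / g (u t) ^ 2 := by
            simp only [hDdef, hat]
            field_simp
            ring
          rw [key]
          apply div_nonpos_of_nonpos_of_nonneg _ (by positivity)
          have h1 : φ (u' t) + c₁ ≤ 0 := by linarith [hcase t htm]
          have h2 : g' (u t) * u' t ≤ 0 :=
            mul_nonpos_of_nonneg_of_nonpos (hg'pos _ (hupos t htI)).le (hu'neg t htm).le
          nlinarith
      have hQba : F β + ap * β + c₁ * (g (u β))⁻¹ ≤ F α + ap * α + c₁ * (g (u α))⁻¹ :=
        hQanti hαmem hβmem hαβ.le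
      have hguab : g (u β) < g (u α) :=
        hgm (hupos β (hsubI hβmem)) (hupos α (hsubI hαmem)) (huanti hαmem hβmem hαβ)
      have hinv : (g (u α))⁻¹ < (g (u β))⁻¹ := by
        rw [inv_lt_inv₀ (hgu_pos α (hsubI hαmem)) (hgu_pos β (hsubI hβmem))]
        exact hguab
      refine ⟨c₁ * ((g (u β))⁻¹ - (g (u α))⁻¹), by nlinarith, by nlinarith⟩
  -- choose the subinterval
  have hkey : ∃ α β δ : ℝ, 0 < α ∧ α < β ∧ β < τ ∧ 0 < δ ∧
      F β ≤ F α - ap * (β - α) - δ := by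
    rcases lt_or_ge 0 (φ (u' (τ/2))) with hc | hc
    · have hbound : ∀ t ∈ Icc (τ/4) (τ/2), φ (u' (τ/2)) ≤ φ (u' t) := by
        intro t ht
        exact hvstrict.antitoneOn ⟨by linarith [ht.1], by linarith [ht.2]⟩
          ⟨by linarith, by linarith⟩ ht.2
      obtain ⟨δ, hδ, hest⟩ := main_est (τ/4) (τ/2) (φ (u' (τ/2)))
        (by linarith) (by linarith) (by linarith) hc (Or.inl hbound)
      exact ⟨τ/4, τ/2, δ, by linarith, by linarith, by linarith, hδ, hest⟩
    · have hneg : φ (u' (3*τ/4)) < 0 := by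
        have := hvstrict ⟨by linarith, by linarith⟩ ⟨by linarith, by linarith⟩
          (by linarith : τ/2 < 3*τ/4)
        linarith
      have hbound : ∀ t ∈ Icc (3*τ/4) (7*τ/8), φ (u' t) ≤ -(-(φ (u' (3*τ/4)))) := by
        intro t ht
        have := hvstrict.antitoneOn ⟨by linarith, by linarith⟩
          ⟨by linarith [ht.1], by linarith [ht.2]⟩ ht.1
        linarith
      obtain ⟨δ, hδ, hest⟩ := main_est (3*τ/4) (7*τ/8) (-(φ (u' (3*τ/4))))
        (by linarith) (by linarith) (by linarith) (by linarith) (Or.inr hbound)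
      exact ⟨3*τ/4, 7*τ/8, δ, by linarith, by linarith, by linarith, hδ, hest⟩
  obtain ⟨α, β, δ, hα, hαβ, hβτ, hδ, hest⟩ := hkey
  -- assemble the chain of inequalities
  have hchain1 : sInf (G '' Ioo 0 τ) ≤ F ((β + τ)/2) + ap * ((β + τ)/2) :=
    hLGle _ ⟨by linarith, by linarith⟩
  have hchain2 : F ((β + τ)/2) + ap * ((β + τ)/2) ≤ F β + ap * β :=
    hGanti ⟨by linarith, by linarith⟩ ⟨by linarith, by linarith⟩ (by linarith)
  have hchain3 : F α + ap * α ≤ F 0 + ap * 0 :=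
    hGanti ⟨le_refl 0, hτ⟩ ⟨by linarith, by linarith⟩ hα.le
  have hchain4 : F T - am * T ≤ F ((τ + T)/2) - am * ((τ + T)/2) :=
    hHanti ⟨by linarith, by linarith⟩ ⟨hτT, le_refl T⟩ (by linarith)
  have hchain5 : F ((τ + T)/2) - am * ((τ + T)/2) ≤ sSup (H '' Ioo τ T) :=
    hLHge _ ⟨by linarith, by linarith⟩
  have hF0T : F 0 = F T := by
    rcases hbc with ⟨h0, hT⟩ | ⟨h0, hT⟩
    · simp only [hFdef, h0, hT, hφ0, zero_div]
    · simp only [hFdef, h0, hT]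
  have final : ap * τ - am * (T - τ) ≤ -δ := by
    have l1 : sInf (G '' Ioo 0 τ) ≤ F 0 - δ + ap * τ - ap * τ := by
      linarith [hchain1, hchain2, hchain3, hest]
    have l2 : F T - am * T ≤ sSup (H '' Ioo τ T) := by
      linarith [hchain4, hchain5]
    have l3 := hFLval
    have l4 := hFRval
    linarith [hF0T]
  linarith
end

section
/- Under the same hypotheses but with g' < 0 on ]0,+∞[ (g positive, decreasing, C¹), any positive Neumann or periodic solution of (φ(u'))' + a(t)g(u) = 0 with stepwise weight a forces ∫₀ᵀ a(t) dt = a₊τ - a₋(T-τ) > 0. -/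
open Set Filter MeasureTheory intervalIntegral

/-!
Write `v = φ(u')`. On an interval where `a ≡ c`, the function `E = v / g(u) + c t` has
derivative `-φ(u') g'(u) u' / g(u)² ≥ 0`, since `s φ(s) > 0` and `g' < 0`. Both boundary
conditions give `v(0) / g(u(0)) = v(T) / g(u(T))`, so the increments of `E` over `[0, τ]` and
`[τ, T]` add up to `a₊τ - a₋(T - τ)`. The first increment is positive: were `E` constant on
`[0, τ]`, `u'` would vanish there, whereas `v' = -a₊ g(u) < 0`. Gluing the two intervals needs
`v` continuous at `τ`, where the equation says nothing: `u'` is a derivative that is monotone on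
either side of `τ`, so by Darboux's theorem it cannot jump there.
-/

theorem strictMonoOn_of_injOn_of_mul_pos {s : Set ℝ} {f : ℝ → ℝ} (hs : s.OrdConnected)
    (hf : ContinuousOn f s) (hinj : InjOn f s) (h0s : (0 : ℝ) ∈ s) (hf0 : f 0 = 0)
    (hsign : ∀ x ∈ s, x ≠ 0 → 0 < x * f x) : StrictMonoOn f s := by
  intro x hx y hy hxy
  have hsub : Icc (min x 0) (max y 0) ⊆ s :=
    hs.out (by rcases min_choice x 0 with h | h <;> rw [h] <;> assumption)
      (by rcases max_choice y 0 with h | h <;> rw [h] <;> assumption)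
  have hxI : x ∈ Icc (min x 0) (max y 0) := ⟨min_le_left _ _, hxy.le.trans (le_max_left _ _)⟩
  have hyI : y ∈ Icc (min x 0) (max y 0) := ⟨(min_le_left _ _).trans hxy.le, le_max_left _ _⟩
  have h0I : (0 : ℝ) ∈ Icc (min x 0) (max y 0) := ⟨min_le_right _ _, le_max_right _ _⟩
  rcases (hf.mono hsub).strictMonoOn_of_injOn_Icc' (h0I.1.trans h0I.2) (hinj.mono hsub) with
    hmono | hanti
  · exact hmono hxI hyI hxy
  -- `f` cannot reverse the order: it sends negatives below `f 0 = 0` and positives above it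
  exfalso
  rcases lt_or_ge x 0 with hx0 | hx0
  · have := hanti hxI h0I hx0
    nlinarith [hsign x hx hx0.ne]
  · have hy0 : 0 < y := hx0.trans_lt hxy
    have := hanti h0I hyI hy0
    nlinarith [hsign y hy hy0.ne']

theorem continuousWithinAt_Ioi_of_hasDerivAt_of_monotoneOn {f f' : ℝ → ℝ} {b c : ℝ}
    (hbc : b < c) (hf : ∀ t ∈ Icc b c, HasDerivAt f (f' t) t)
    (hmono : MonotoneOn f' (Ioc b c)) : ContinuousWithinAt f' (Ioi b) b := by
  have hd : ∀ t ∈ Ioc b c, ∀ x ∈ Icc b t, HasDerivWithinAt f (f' x) (Icc b t) x :=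
    fun t ht x hx => (hf x ⟨hx.1, hx.2.trans ht.2⟩).hasDerivWithinAt
  have hge : ∀ t ∈ Ioc b c, f' b ≤ f' t := by
    intro t ht
    by_contra! h
    obtain ⟨s, hs, hfs⟩ := exists_hasDerivWithinAt_eq_of_lt_of_gt ht.1.le (hd t ht)
      (m := (f' t + f' b) / 2) (by linarith) (by linarith)
    have := hmono ⟨hs.1, hs.2.le.trans ht.2⟩ ht hs.2.le
    linarith
  have hclose : ∀ ε > 0, ∃ t ∈ Ioc b c, f' t < f' b + ε := by
    intro ε hε
    by_contra! h
    have hc : c ∈ Ioc b c := ⟨hbc, le_rfl⟩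
    obtain ⟨s, hs, hfs⟩ := exists_hasDerivWithinAt_eq_of_gt_of_lt hbc.le (hd c hc)
      (m := f' b + ε / 2) (by linarith) (by linarith [h c hc])
    linarith [h s ⟨hs.1, hs.2.le⟩]
  refine tendsto_order.2 ⟨fun m hm => ?_, fun m hm => ?_⟩
  · filter_upwards [Ioc_mem_nhdsGT hbc] with t ht using hm.trans_le (hge t ht)
  · obtain ⟨t, ht, hft⟩ := hclose (m - f' b) (by linarith)
    filter_upwards [Ioc_mem_nhdsGT ht.1] with s hs
    linarith [hmono ⟨hs.1, hs.2.trans ht.2⟩ ht hs.2]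

theorem continuousWithinAt_Iio_of_hasDerivAt_of_antitoneOn {f f' : ℝ → ℝ} {b c : ℝ}
    (hbc : b < c) (hf : ∀ t ∈ Icc b c, HasDerivAt f (f' t) t)
    (hanti : AntitoneOn f' (Ico b c)) : ContinuousWithinAt f' (Iio c) c := by
  have hderiv : ∀ t ∈ Icc (-c) (-b), HasDerivAt (fun x => -f (-x)) (f' (-t)) t := by
    intro t ht
    have := ((hf (-t) ⟨le_neg.2 ht.2, neg_le.2 ht.1⟩).comp t (hasDerivAt_neg t)).neg
    exact this.congr_deriv (by ring)
  have hmono : MonotoneOn (fun x => f' (-x)) (Ioc (-c) (-b)) := fun x hx y hy hxy =>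
    hanti ⟨le_neg.2 hy.2, neg_lt.2 hy.1⟩ ⟨le_neg.2 hx.2, neg_lt.2 hx.1⟩ (neg_le_neg hxy)
  have hreflected :=
    continuousWithinAt_Ioi_of_hasDerivAt_of_monotoneOn (neg_lt_neg hbc) hderiv hmono
  simpa [Function.comp_def] using hreflected.comp continuous_neg.continuousWithinAt (s := Iio c)
    fun x hx => mem_Ioi.2 (neg_lt_neg hx)

theorem integral_eq_of_eqOn_Ioo_of_eqOn_Ioo {f : ℝ → ℝ} {p r q c d : ℝ} (hpr : p ≤ r)
    (hrq : r ≤ q) (hc : EqOn f (fun _ => c) (Ioo p r)) (hd : EqOn f (fun _ => d) (Ioo r q)) :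
    ∫ x in p..q, f x = c * (r - p) + d * (q - r) := by
  have hc' : EqOn f (fun _ => c) (uIoo p r) := uIoo_of_le hpr ▸ hc
  have hd' : EqOn f (fun _ => d) (uIoo r q) := uIoo_of_le hrq ▸ hd
  rw [← integral_add_adjacent_intervals (intervalIntegrable_const.congr_uIoo hc'.symm)
    (intervalIntegrable_const.congr_uIoo hd'.symm), integral_congr_uIoo hc',
    integral_congr_uIoo hd', intervalIntegral.integral_const, intervalIntegral.integral_const,
    smul_eq_mul, smul_eq_mul]
  ring

theorem continuousAt_of_hasDerivAt_of_antitoneOn_of_monotoneOn {f f' : ℝ → ℝ} {p τ q : ℝ}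
    (hpτ : p < τ) (hτq : τ < q) (hf : ∀ t ∈ Icc p q, HasDerivAt f (f' t) t)
    (hanti : AntitoneOn f' (Ico p τ)) (hmono : MonotoneOn f' (Ioc τ q)) :
    ContinuousAt f' τ :=
  continuousAt_iff_continuous_left'_right'.2
    ⟨continuousWithinAt_Iio_of_hasDerivAt_of_antitoneOn hpτ
      (fun t ht => hf t ⟨ht.1, ht.2.trans hτq.le⟩) hanti,
    continuousWithinAt_Ioi_of_hasDerivAt_of_monotoneOn hτq
      (fun t ht => hf t ⟨hpτ.le.trans ht.1, ht.2⟩) hmono⟩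

theorem continuousOn_comp_deriv_of_deriv_nonpos_nonneg {φ u u' w : ℝ → ℝ} {Ω : Set ℝ}
    {p τ q : ℝ}
    (hpτ : p < τ) (hτq : τ < q) (hΩ : IsOpen Ω) (hφc : ContinuousOn φ Ω)
    (hφ : StrictMonoOn φ Ω) (hu : ∀ t ∈ Icc p q, HasDerivAt u (u' t) t)
    (hu'Ω : ∀ t ∈ Icc p q, u' t ∈ Ω)
    (hv : ∀ t ∈ Icc p q, t ≠ τ → HasDerivAt (fun s => φ (u' s)) (w t) t)
    (hw_left : ∀ t ∈ Ioo p τ, w t ≤ 0) (hw_right : ∀ t ∈ Ioo τ q, 0 ≤ w t) :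
    ContinuousOn (fun s => φ (u' s)) (Icc p q) := by
  have hIco : Ico p τ ⊆ Icc p q := fun t ht => ⟨ht.1, ht.2.le.trans hτq.le⟩
  have hIoc : Ioc τ q ⊆ Icc p q := fun t ht => ⟨hpτ.le.trans ht.1.le, ht.2⟩
  have hanti : AntitoneOn (fun s => φ (u' s)) (Ico p τ) := by
    refine antitoneOn_of_hasDerivWithinAt_nonpos (convex_Ico p τ) (f' := w)
      (fun t ht => (hv t (hIco ht) ht.2.ne).continuousAt.continuousWithinAt)
      (fun t ht => ?_) (fun t ht => ?_) <;> rw [interior_Ico] at ht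
    · exact (hv t (hIco (Ioo_subset_Ico_self ht)) ht.2.ne).hasDerivWithinAt
    · exact hw_left t ht
  have hmono : MonotoneOn (fun s => φ (u' s)) (Ioc τ q) := by
    refine monotoneOn_of_hasDerivWithinAt_nonneg (convex_Ioc τ q) (f' := w)
      (fun t ht => (hv t (hIoc ht) ht.1.ne').continuousAt.continuousWithinAt)
      (fun t ht => ?_) (fun t ht => ?_) <;> rw [interior_Ioc] at ht
    · exact (hv t (hIoc (Ioo_subset_Ioc_self ht)) ht.1.ne').hasDerivWithinAt
    · exact hw_right t ht
  -- `φ` is strictly increasing, so `u'` inherits the monotonicity of `φ ∘ u'`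
  have hu'τ : ContinuousAt u' τ :=
    continuousAt_of_hasDerivAt_of_antitoneOn_of_monotoneOn hpτ hτq hu
      (fun x hx y hy hxy =>
        (hφ.le_iff_le (hu'Ω y (hIco hy)) (hu'Ω x (hIco hx))).1 (hanti hx hy hxy))
      (fun x hx y hy hxy =>
        (hφ.le_iff_le (hu'Ω x (hIoc hx)) (hu'Ω y (hIoc hy))).1 (hmono hx hy hxy))
  intro t ht
  rcases eq_or_ne t τ with rfl | htτ
  · exact ((hφc.continuousAt (hΩ.mem_nhds (hu'Ω t ht))).comp hu'τ).continuousWithinAt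
  · exact (hv t ht htτ).continuousAt.continuousWithinAt

/-- On an interval where the weight is the constant `c`, this is `φ(u') / g(u) + ∫ a` up to an
additive constant; its derivative `-φ(u') g'(u) u' / g(u)²` is nonnegative when `g' < 0`. -/
noncomputable def energy (φ u' u g : ℝ → ℝ) (c t : ℝ) : ℝ := φ (u' t) / g (u t) + c * t

theorem hasDerivAt_energy {φ u' u g : ℝ → ℝ} {c du dg t : ℝ}
    (hv : HasDerivAt (fun s => φ (u' s)) (-(c * g (u t))) t) (hu : HasDerivAt u du t)
    (hg : HasDerivAt g dg (u t)) (hg0 : g (u t) ≠ 0) :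
    HasDerivAt (energy φ u' u g c) (-(φ (u' t) * dg * du) / g (u t) ^ 2) t := by
  refine ((hv.div (hg.comp t hu) hg0).add ((hasDerivAt_id t).const_mul c)).congr_deriv ?_
  simp only [Function.comp_apply]
  field_simp
  ring

section Energy

variable {φ u u' g g' : ℝ → ℝ} {c p q : ℝ}

theorem monotoneOn_energy (hg : ∀ x, 0 < x → HasDerivAt g (g' x) x)
    (hgpos : ∀ x, 0 < x → 0 < g x) (hg'neg : ∀ x, 0 < x → g' x < 0)
    (hupos : ∀ t ∈ Icc p q, 0 < u t) (hu : ∀ t ∈ Icc p q, HasDerivAt u (u' t) t)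
    (hv : ContinuousOn (fun s => φ (u' s)) (Icc p q))
    (hvd : ∀ t ∈ Ioo p q, HasDerivAt (fun s => φ (u' s)) (-(c * g (u t))) t)
    (hφsign : ∀ t ∈ Ioo p q, u' t ≠ 0 → 0 < u' t * φ (u' t)) :
    MonotoneOn (energy φ u' u g c) (Icc p q) := by
  have hgu_cont : ContinuousOn (fun t => g (u t)) (Icc p q) := fun t ht =>
    ((hg _ (hupos t ht)).continuousAt.comp (hu t ht).continuousAt).continuousWithinAt
  refine monotoneOn_of_hasDerivWithinAt_nonneg (convex_Icc p q)
    (f' := fun t => -(φ (u' t) * g' (u t) * u' t) / g (u t) ^ 2)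
    ((hv.div hgu_cont fun t ht => (hgpos _ (hupos t ht)).ne').add
      (continuousOn_const.mul continuousOn_id))
    (fun t ht => ?_) (fun t ht => ?_) <;> rw [interior_Icc] at ht <;>
    have hut := hupos t (Ioo_subset_Icc_self ht)
  · exact (hasDerivAt_energy (hvd t ht) (hu t (Ioo_subset_Icc_self ht)) (hg _ hut)
      (hgpos _ hut).ne').hasDerivWithinAt
  · refine div_nonneg ?_ (sq_nonneg _)
    rcases eq_or_ne (u' t) 0 with h0 | h0
    · simp [h0]
    · nlinarith [hφsign t ht h0, hg'neg _ hut]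

theorem energy_lt_energy (hc : 0 < c) (hpq : p < q) (hg : ∀ x, 0 < x → HasDerivAt g (g' x) x)
    (hgpos : ∀ x, 0 < x → 0 < g x) (hg'neg : ∀ x, 0 < x → g' x < 0)
    (hupos : ∀ t ∈ Icc p q, 0 < u t) (hu : ∀ t ∈ Icc p q, HasDerivAt u (u' t) t)
    (hv : ContinuousOn (fun s => φ (u' s)) (Icc p q))
    (hvd : ∀ t ∈ Ioo p q, HasDerivAt (fun s => φ (u' s)) (-(c * g (u t))) t)
    (hφsign : ∀ t ∈ Ioo p q, u' t ≠ 0 → 0 < u' t * φ (u' t)) :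
    energy φ u' u g c p < energy φ u' u g c q := by
  set E := energy φ u' u g c
  have hmono : MonotoneOn E (Icc p q) := monotoneOn_energy hg hgpos hg'neg hupos hu hv hvd hφsign
  by_contra! hle
  have hconst : ∀ s ∈ Ioo p q, E s = E p := fun s hs =>
    le_antisymm ((hmono (Ioo_subset_Icc_self hs) ⟨hpq.le, le_rfl⟩ hs.2.le).trans hle)
      (hmono ⟨le_rfl, hpq.le⟩ (Ioo_subset_Icc_self hs) hs.1.le)
  -- a constant energy forces `u' = 0`, so `φ ∘ u'` is constant although its derivative is `-c g(u)`
  have hu'0 : ∀ t ∈ Ioo p q, u' t = 0 := by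
    intro t ht
    by_contra h0
    have hzero : HasDerivAt E 0 t := (hasDerivAt_const t _).congr_of_eventuallyEq
      (eventually_of_mem (isOpen_Ioo.mem_nhds ht) hconst)
    have hut := hupos t (Ioo_subset_Icc_self ht)
    have hderiv := (hasDerivAt_energy (hvd t ht) (hu t (Ioo_subset_Icc_self ht)) (hg _ hut)
      (hgpos _ hut).ne').unique hzero
    have hnum : 0 < -(φ (u' t) * g' (u t) * u' t) := by
      nlinarith [hφsign t ht h0, hg'neg _ hut]
    exact (div_pos hnum (pow_pos (hgpos _ hut) 2)).ne' hderiv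
  obtain ⟨m, hm⟩ := nonempty_Ioo.2 hpq
  have hzero : HasDerivAt (fun s => φ (u' s)) 0 m :=
    (hasDerivAt_const m (φ 0)).congr_of_eventuallyEq
      (eventually_of_mem (isOpen_Ioo.mem_nhds hm) fun s hs => by simp only [hu'0 s hs])
  nlinarith [(hvd m hm).unique hzero, hgpos _ (hupos m (Ioo_subset_Icc_self hm))]

end Energy

theorem stmt_11_general (ap am τ T : ℝ) (hap : 0 < ap) (ham : 0 < am)
    (hτ : 0 < τ) (hτT : τ < T)
    (a : ℝ → ℝ)
    (ha : ∀ t, (t ∈ Ico 0 τ → a t = ap) ∧ (t ∈ Ico τ T → a t = -am))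
    (Ω : Set ℝ) (hΩopen : IsOpen Ω) (hΩconn : Ω.OrdConnected) (h0Ω : (0 : ℝ) ∈ Ω)
    (φ : ℝ → ℝ) (hφcont : ContinuousOn φ Ω)
    (hφinj : InjOn φ Ω)
    (hφ0 : φ 0 = 0) (hφsign : ∀ s ∈ Ω, s ≠ 0 → s * φ s > 0)
    (g g' : ℝ → ℝ)
    (hgpos : ∀ x : ℝ, 0 < x → 0 < g x)
    (hg' : ∀ x : ℝ, 0 < x → HasDerivAt g (g' x) x)
    (hg'neg : ∀ x : ℝ, 0 < x → g' x < 0)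
    (u u' : ℝ → ℝ)
    (hupos : ∀ t ∈ Icc 0 T, 0 < u t)
    (hu : ∀ t ∈ Icc 0 T, HasDerivAt u (u' t) t)
    (hu'Ω : ∀ t ∈ Icc 0 T, u' t ∈ Ω)
    (heq : ∀ t ∈ Icc 0 T, t ≠ τ →
      HasDerivAt (fun s => φ (u' s)) (-(a t * g (u t))) t)
    (hbc : (u' 0 = 0 ∧ u' T = 0) ∨ (u 0 = u T ∧ u' 0 = u' T)) :
    (∫ t in (0 : ℝ)..T, a t) = ap * τ - am * (T - τ) ∧
      0 < ap * τ - am * (T - τ) := by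
  have hleft : Icc 0 τ ⊆ Icc 0 T := Icc_subset_Icc le_rfl hτT.le
  have hright : Icc τ T ⊆ Icc 0 T := Icc_subset_Icc hτ.le le_rfl
  have ha₁ : ∀ t ∈ Ioo 0 τ, a t = ap := fun t ht => (ha t).1 (Ioo_subset_Ico_self ht)
  have ha₂ : ∀ t ∈ Ioo τ T, a t = -am := fun t ht => (ha t).2 (Ioo_subset_Ico_self ht)
  have hvd₁ : ∀ t ∈ Ioo 0 τ, HasDerivAt (fun s => φ (u' s)) (-(ap * g (u t))) t := fun t ht =>
    ha₁ t ht ▸ heq t (hleft (Ioo_subset_Icc_self ht)) ht.2.ne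
  have hvd₂ : ∀ t ∈ Ioo τ T, HasDerivAt (fun s => φ (u' s)) (-(-am * g (u t))) t := fun t ht =>
    ha₂ t ht ▸ heq t (hright (Ioo_subset_Icc_self ht)) ht.1.ne'
  have hv : ContinuousOn (fun s => φ (u' s)) (Icc 0 T) :=
    continuousOn_comp_deriv_of_deriv_nonpos_nonneg hτ hτT hΩopen hφcont
      (strictMonoOn_of_injOn_of_mul_pos hΩconn hφcont hφinj h0Ω hφ0 hφsign) hu hu'Ω heq
      (fun t ht => by
        nlinarith [ha₁ t ht, hgpos _ (hupos t (hleft (Ioo_subset_Icc_self ht)))])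
      (fun t ht => by
        nlinarith [ha₂ t ht, hgpos _ (hupos t (hright (Ioo_subset_Icc_self ht)))])
  have hsign : ∀ t ∈ Icc 0 T, u' t ≠ 0 → 0 < u' t * φ (u' t) := fun t ht =>
    hφsign _ (hu'Ω t ht)
  have h₁ := energy_lt_energy hap hτ hg' hgpos hg'neg (fun t ht => hupos t (hleft ht))
    (fun t ht => hu t (hleft ht)) (hv.mono hleft) hvd₁
    (fun t ht => hsign t (hleft (Ioo_subset_Icc_self ht)))
  have h₂ := monotoneOn_energy hg' hgpos hg'neg (fun t ht => hupos t (hright ht))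
    (fun t ht => hu t (hright ht)) (hv.mono hright) hvd₂
    (fun t ht => hsign t (hright (Ioo_subset_Icc_self ht)))
    ⟨le_rfl, hτT.le⟩ ⟨hτT.le, le_rfl⟩ hτT.le
  have hbdry : φ (u' 0) / g (u 0) = φ (u' T) / g (u T) := by
    rcases hbc with ⟨h0, hT⟩ | ⟨h0, hT⟩ <;> simp [h0, hT, hφ0]
  refine ⟨(integral_eq_of_eqOn_Ioo_of_eqOn_Ioo hτ.le hτT.le ha₁ ha₂).trans (by ring), ?_⟩
  simp only [energy] at h₁ h₂
  linarith

/-- necessary condition `∫₀ᵀ a > 0` for positive Neumann/periodic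
solutions of `(φ(u'))' + a(t) g(u) = 0` with decreasing `g`. -/
theorem stmt_11 (ap am τ T : ℝ) (hap : 0 < ap) (ham : 0 < am)
    (hτ : 0 < τ) (hτT : τ < T)
    (a : ℝ → ℝ)
    (ha : ∀ t, (t ∈ Ico 0 τ → a t = ap) ∧ (t ∈ Ico τ T → a t = -am))
    (Ω : Set ℝ) (hΩopen : IsOpen Ω) (hΩconn : Ω.OrdConnected) (h0Ω : (0 : ℝ) ∈ Ω)
    (φ : ℝ → ℝ) (hφcont : ContinuousOn φ Ω)
    (hφinj : InjOn φ Ω) (hφsurj : SurjOn φ Ω univ)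
    (hφ0 : φ 0 = 0) (hφsign : ∀ s ∈ Ω, s ≠ 0 → s * φ s > 0)
    (g g' : ℝ → ℝ)
    (hgpos : ∀ x : ℝ, 0 < x → 0 < g x)
    (hg' : ∀ x : ℝ, 0 < x → HasDerivAt g (g' x) x)
    (hg'neg : ∀ x : ℝ, 0 < x → g' x < 0)
    (u u' : ℝ → ℝ)
    (hupos : ∀ t ∈ Icc 0 T, 0 < u t)
    (hu : ∀ t ∈ Icc 0 T, HasDerivAt u (u' t) t)
    (hu'Ω : ∀ t ∈ Icc 0 T, u' t ∈ Ω)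
    (heq : ∀ t ∈ Icc 0 T, t ≠ τ →
      HasDerivAt (fun s => φ (u' s)) (-(a t * g (u t))) t)
    (hbc : (u' 0 = 0 ∧ u' T = 0) ∨ (u 0 = u T ∧ u' 0 = u' T)) :
    (∫ t in (0 : ℝ)..T, a t) = ap * τ - am * (T - τ) ∧
      0 < ap * τ - am * (T - τ) :=
  stmt_11_general ap am τ T hap ham hτ hτT a ha Ω hΩopen hΩconn h0Ω φ hφcont hφinj hφ0 hφsign g g'
    hgpos hg' hg'neg u u' hupos hu hu'Ω heq hbc
end

section
/- Let p > 1, a₊, a₋ > 0, γ ∈ ℝ \ {-1}, and define I₁(ρ) = ∫_{a₊(ρ+1)/(a₊+a₋)}^{1} |a₊ - a₊ξ|^{-1/p} |ξ|^{-γ/(γ+1)} dξ and I₂(ρ) = ∫_{a₊/a₋}^{(a₊/(a₊+a₋))(ρ+1)/ρ} |a₋ξ - a₊|^{-1/p} |ξ|^{-γ/(γ+1)} dξ. Then on the interval of definition I₂'(ρ) = ρ^{-2 + γ/(γ+1) + 1/p} · I₁'(ρ). -/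
/-!
Both integrals have a fixed integrand and one moving endpoint, `c₁(ρ) = a₊(ρ+1)/(a₊+a₋)` and
`c₂(ρ) = c₁(ρ)/ρ`, so by the fundamental theorem of calculus each derivative is the integrand at
the endpoint times the endpoint's derivative, and `c₂' = -c₁'/ρ²`. Moreover
`a₋ c₂ - a₊ = (a₊ - a₊ c₁)/ρ`, so the second integrand at `c₂` is the first one at `c₁`
rescaled by `ρ ^ (1/p + γ/(γ+1))`.
-/

open Set MeasureTheory intervalIntegral Topology

theorem hasDerivAt_integral_comp_right {E : Type*} [NormedAddCommGroup E] [NormedSpace ℝ E]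
    [CompleteSpace E] {f : ℝ → E} {c : ℝ → ℝ} {a c' ρ : ℝ}
    (hf : IntervalIntegrable f volume a (c ρ)) (hfm : StronglyMeasurableAtFilter f (𝓝 (c ρ)))
    (hfc : ContinuousAt f (c ρ)) (hc : HasDerivAt c c' ρ) :
    HasDerivAt (fun s => ∫ x in a..c s, f x) (c' • f (c ρ)) ρ :=
  (integral_hasDerivAt_right hf hfm hfc).scomp ρ hc

theorem hasDerivAt_integral_comp_left {E : Type*} [NormedAddCommGroup E] [NormedSpace ℝ E]
    [CompleteSpace E] {f : ℝ → E} {c : ℝ → ℝ} {b c' ρ : ℝ}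
    (hf : IntervalIntegrable f volume (c ρ) b) (hfm : StronglyMeasurableAtFilter f (𝓝 (c ρ)))
    (hfc : ContinuousAt f (c ρ)) (hc : HasDerivAt c c' ρ) :
    HasDerivAt (fun s => ∫ x in c s..b, f x) (-(c' • f (c ρ))) ρ := by
  simpa only [integral_symm b] using (hasDerivAt_integral_comp_right hf.symm hfm hfc hc).fun_neg

theorem continuousAt_abs_rpow_mul_abs_rpow_s15 {g : ℝ → ℝ} {e₁ e₂ x : ℝ} (hg : Continuous g)
    (hgx : g x ≠ 0) (hx : x ≠ 0) :
    ContinuousAt (fun ξ => |g ξ| ^ e₁ * |ξ| ^ e₂) x :=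
  ((hg.abs.continuousAt).rpow_const (.inl (abs_ne_zero.2 hgx))).mul
    (continuous_abs.continuousAt.rpow_const (.inl (abs_ne_zero.2 hx)))

theorem hasDerivAt_mul_add_one_div (a b ρ : ℝ) :
    HasDerivAt (fun s => a * (s + 1) / b) (a / b) ρ :=
  ((((hasDerivAt_id ρ).add_const 1).const_mul a).div_const b).congr_deriv (by ring)

theorem hasDerivAt_mul_add_one_div_self (a : ℝ) {ρ : ℝ} (hρ : ρ ≠ 0) :
    HasDerivAt (fun s => a * ((s + 1) / s)) (-a / ρ ^ 2) ρ :=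
  ((((hasDerivAt_id ρ).add_const 1).div (hasDerivAt_id ρ) hρ).const_mul a).congr_deriv
    (by simp only [id]; ring)

theorem abs_div_rpow_mul_abs_div_rpow {t : ℝ} (ht : 0 < t) (u v e₁ e₂ : ℝ) :
    |u / t| ^ e₁ * |v / t| ^ e₂ = t ^ (-(e₁ + e₂)) * (|u| ^ e₁ * |v| ^ e₂) := by
  rw [abs_div, abs_div, abs_of_pos ht, Real.div_rpow (abs_nonneg _) ht.le,
    Real.div_rpow (abs_nonneg _) ht.le, Real.rpow_neg ht.le, Real.rpow_add ht]
  field_simp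

theorem stmt_15_general (p ap am γ : ℝ) (hap : 0 < ap) (ham : 0 < am)
    (I₁ I₂ : ℝ → ℝ)
    (hI₁ : ∀ ρ : ℝ, I₁ ρ =
      ∫ ξ in (ap * (ρ + 1) / (ap + am))..1,
        |ap - ap * ξ| ^ (-(1 / p)) * |ξ| ^ (-(γ / (γ + 1))))
    (hI₂ : ∀ ρ : ℝ, I₂ ρ =
      ∫ ξ in (ap / am)..(ap / (ap + am) * ((ρ + 1) / ρ)),
        |am * ξ - ap| ^ (-(1 / p)) * |ξ| ^ (-(γ / (γ + 1))))
    (ρ : ℝ)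
    (hρ : (-1 < γ ∧ ρ ∈ Ioo 0 (am / ap)) ∨ (γ < -1 ∧ ρ ∈ Ioi (am / ap)))
    (hint₁ : ∀ s : ℝ,
      ((-1 < γ ∧ s ∈ Ioo 0 (am / ap)) ∨ (γ < -1 ∧ s ∈ Ioi (am / ap))) →
      IntervalIntegrable
        (fun ξ : ℝ => |ap - ap * ξ| ^ (-(1 / p)) * |ξ| ^ (-(γ / (γ + 1))))
        volume (ap * (s + 1) / (ap + am)) 1)
    (hint₂ : ∀ s : ℝ,
      ((-1 < γ ∧ s ∈ Ioo 0 (am / ap)) ∨ (γ < -1 ∧ s ∈ Ioi (am / ap))) →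
      IntervalIntegrable
        (fun ξ : ℝ => |am * ξ - ap| ^ (-(1 / p)) * |ξ| ^ (-(γ / (γ + 1))))
        volume (ap / am) (ap / (ap + am) * ((s + 1) / s))) :
    deriv I₂ ρ = ρ ^ (-2 + γ / (γ + 1) + 1 / p) * deriv I₁ ρ := by
  obtain ⟨hρ0, hρq⟩ : 0 < ρ ∧ ρ ≠ am / ap := by
    rcases hρ with ⟨_, h⟩ | ⟨_, h⟩
    exacts [⟨h.1, h.2.ne⟩, ⟨(div_pos ham hap).trans h, h.ne'⟩]
  set f₁ := fun ξ : ℝ => |ap - ap * ξ| ^ (-(1 / p)) * |ξ| ^ (-(γ / (γ + 1)))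
  set f₂ := fun ξ : ℝ => |am * ξ - ap| ^ (-(1 / p)) * |ξ| ^ (-(γ / (γ + 1)))
  set x₁ := ap * (ρ + 1) / (ap + am)
  set x₂ := ap / (ap + am) * ((ρ + 1) / ρ)
  have hx₁ : 0 < x₁ := by positivity
  have hA : ap - ap * x₁ ≠ 0 := by
    rw [ne_eq, sub_eq_zero, eq_comm, mul_eq_left₀ hap.ne', div_eq_one_iff_eq (by positivity)]
    contrapose! hρq
    field_simp
    linarith
  have hx₂ : x₂ = x₁ / ρ := by simp only [x₁, x₂]; field_simp
  have hB : am * x₂ - ap = (ap - ap * x₁) / ρ := by simp only [x₁, x₂]; field_simp; ring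
  have hD₁ : HasDerivAt I₁ (-((ap / (ap + am)) • f₁ x₁)) ρ := by
    rw [funext hI₁]
    exact hasDerivAt_integral_comp_left (c := fun s => ap * (s + 1) / (ap + am))
      (hint₁ ρ hρ) (by fun_prop : Measurable f₁).stronglyMeasurable.stronglyMeasurableAtFilter
      (continuousAt_abs_rpow_mul_abs_rpow_s15 (by fun_prop) hA hx₁.ne')
      (hasDerivAt_mul_add_one_div ap (ap + am) ρ)
  have hD₂ : HasDerivAt I₂ ((-(ap / (ap + am)) / ρ ^ 2) • f₂ x₂) ρ := by
    rw [funext hI₂]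
    exact hasDerivAt_integral_comp_right (c := fun s => ap / (ap + am) * ((s + 1) / s))
      (hint₂ ρ hρ) (by fun_prop : Measurable f₂).stronglyMeasurable.stronglyMeasurableAtFilter
      (continuousAt_abs_rpow_mul_abs_rpow_s15 (by fun_prop) (hB.trans_ne (div_ne_zero hA hρ0.ne'))
        (hx₂.trans_ne (div_pos hx₁ hρ0).ne'))
      (hasDerivAt_mul_add_one_div_self (ap / (ap + am)) hρ0.ne')
  have hscale : f₂ x₂ = ρ ^ (γ / (γ + 1) + 1 / p) * f₁ x₁ := by
    have := abs_div_rpow_mul_abs_div_rpow hρ0 (ap - ap * x₁) x₁ (-(1 / p)) (-(γ / (γ + 1)))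
    rw [← hB, ← hx₂] at this
    simp only [f₁, f₂, this]
    ring_nf
  rw [hD₁.deriv, hD₂.deriv, smul_eq_mul, smul_eq_mul, hscale, add_assoc,
    Real.rpow_add hρ0 (-2), Real.rpow_neg hρ0.le, Real.rpow_two]
  field_simp

/-- p-Laplacian version of `I₂'(ρ) = ρ^{-2+γ/(γ+1)+1/p} I₁'(ρ)`. -/
theorem stmt_15 (p ap am γ : ℝ) (hp : 1 < p) (hap : 0 < ap) (ham : 0 < am)
    (hγ : γ ≠ -1)
    (I₁ I₂ : ℝ → ℝ)
    (hI₁ : ∀ ρ : ℝ, I₁ ρ =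
      ∫ ξ in (ap * (ρ + 1) / (ap + am))..1,
        |ap - ap * ξ| ^ (-(1 / p)) * |ξ| ^ (-(γ / (γ + 1))))
    (hI₂ : ∀ ρ : ℝ, I₂ ρ =
      ∫ ξ in (ap / am)..(ap / (ap + am) * ((ρ + 1) / ρ)),
        |am * ξ - ap| ^ (-(1 / p)) * |ξ| ^ (-(γ / (γ + 1))))
    (ρ : ℝ)
    (hρ : (-1 < γ ∧ ρ ∈ Ioo 0 (am / ap)) ∨ (γ < -1 ∧ ρ ∈ Ioi (am / ap)))
    (hint₁ : ∀ s : ℝ,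
      ((-1 < γ ∧ s ∈ Ioo 0 (am / ap)) ∨ (γ < -1 ∧ s ∈ Ioi (am / ap))) →
      IntervalIntegrable
        (fun ξ : ℝ => |ap - ap * ξ| ^ (-(1 / p)) * |ξ| ^ (-(γ / (γ + 1))))
        volume (ap * (s + 1) / (ap + am)) 1)
    (hint₂ : ∀ s : ℝ,
      ((-1 < γ ∧ s ∈ Ioo 0 (am / ap)) ∨ (γ < -1 ∧ s ∈ Ioi (am / ap))) →
      IntervalIntegrable
        (fun ξ : ℝ => |am * ξ - ap| ^ (-(1 / p)) * |ξ| ^ (-(γ / (γ + 1))))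
        volume (ap / am) (ap / (ap + am) * ((s + 1) / s))) :
    deriv I₂ ρ = ρ ^ (-2 + γ / (γ + 1) + 1 / p) * deriv I₁ ρ :=
  stmt_15_general p ap am γ hap ham I₁ I₂ hI₁ hI₂ ρ hρ hint₁ hint₂
end

section
/- Let p > 1, a₊, a₋ > 0, and γ ∈ ℝ with γ > p-1 or γ ≤ (1-2p)/(p-1). Then the function F_p(ρ) = ρ^{-1 + γ/(γ+1) + 1/p} · I₁(ρ)/I₂(ρ) (with I₁, I₂ the p-Laplacian time-map integrals) is strictly monotone increasing on its interval of definition: ]0, a₋/a₊[ when γ > p-1, and ]a₋/a₊, +∞[ when γ ≤ (1-2p)/(p-1). In particular, when γ = (1-2p)/(p-1) the ratio I₁/I₂ is constant. -/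
/-!
With `α = 1/p` and `β = γ/(γ+1)`, the substitutions `ξ = 1 - (1 - y) t` and `ξ = (a₊/a₋) η` turn
both integrals into the kernel `K(y) = ∫₀¹ t^{-α} ((1-t)/y + t)^{-β} dt`, evaluated at
`y₁ = a₊(ρ+1)/(a₊+a₋)` and `y₂ = a₋(ρ+1)/((a₊+a₋)ρ)`, and all powers of `ρ` cancel:
`F_p(ρ) = (a₋/a₊) K(y₁)/K(y₂)` for `ρ > 0`, `ρ ≠ a₋/a₊` (at `ρ = a₋/a₊` both integrals vanish).
In both regimes of `γ` we have `β > 0`, so the integrand of `K` is strictly increasing in `y`;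
since `y₁` increases and `y₂` decreases with `ρ`, `F_p` is strictly increasing.
For `γ = (1-2p)/(p-1)` we get `β = 2 - α`, where `K(y) = y/(1-α)` and `I₁/I₂ = 1`.
-/

open Set MeasureTheory intervalIntegral

noncomputable def timeMapKernel (α β y : ℝ) : ℝ :=
  ∫ t in (0:ℝ)..1, t ^ (-α) * ((1 - t) / y + t) ^ (-β)

lemma one_sub_div_add_pos {y t : ℝ} (hy : 0 < y) (ht : t ∈ Icc (0:ℝ) 1) :
    0 < (1 - t) / y + t := by
  have : 0 ≤ (1 - t) / y := div_nonneg (by linarith [ht.2]) hy.le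
  rcases ht.1.eq_or_lt with rfl | ht₀
  · simpa using hy
  · positivity

lemma intervalIntegrable_timeMapKernel {α y : ℝ} (β : ℝ) (hα : α < 1) (hy : 0 < y) :
    IntervalIntegrable (fun t : ℝ => t ^ (-α) * ((1 - t) / y + t) ^ (-β)) volume 0 1 := by
  refine (intervalIntegrable_rpow' (by linarith)).mul_continuousOn ?_
  rw [uIcc_of_le zero_le_one]
  exact ContinuousOn.rpow_const (by fun_prop) fun t ht => Or.inl (one_sub_div_add_pos hy ht).ne'

lemma timeMapKernel_pos {α y : ℝ} (β : ℝ) (hα : α < 1) (hy : 0 < y) :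
    0 < timeMapKernel α β y :=
  intervalIntegral_pos_of_pos_on (intervalIntegrable_timeMapKernel β hα hy)
    (fun _ ht => mul_pos (Real.rpow_pos_of_pos ht.1 _)
      (Real.rpow_pos_of_pos (one_sub_div_add_pos hy (Ioo_subset_Icc_self ht)) _)) zero_lt_one

lemma strictMonoOn_timeMapKernel {α β : ℝ} (hα : α < 1) (hβ : 0 < β) :
    StrictMonoOn (timeMapKernel α β) (Ioi 0) := by
  intro y hy z hz hyz
  rw [← sub_pos, timeMapKernel, timeMapKernel, ← intervalIntegral.integral_sub
    (intervalIntegrable_timeMapKernel β hα hz) (intervalIntegrable_timeMapKernel β hα hy)]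
  refine intervalIntegral_pos_of_pos_on ((intervalIntegrable_timeMapKernel β hα hz).sub
    (intervalIntegrable_timeMapKernel β hα hy)) (fun t ht => ?_) zero_lt_one
  have hbase : (1 - t) / z + t < (1 - t) / y + t := by
    gcongr
    linarith [ht.2]
  rw [← mul_sub]
  exact mul_pos (Real.rpow_pos_of_pos ht.1 _) (sub_pos.2 (Real.rpow_lt_rpow_of_neg
    (one_sub_div_add_pos hz (Ioo_subset_Icc_self ht)) hbase (neg_neg_of_pos hβ)))

lemma timeMapKernel_two_sub {α y : ℝ} (hα : α < 1) (hy : 0 < y) :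
    timeMapKernel α (2 - α) y = y / (1 - α) := by
  have h1α : 0 < 1 - α := by linarith
  set F : ℝ → ℝ := fun t => y / (1 - α) * (t ^ (1 - α) * ((1 - t) / y + t) ^ (α - 1))
  have hF : ∀ t ∈ Ioo (0:ℝ) 1,
      HasDerivAt F (t ^ (-α) * ((1 - t) / y + t) ^ (-(2 - α))) t := by
    intro t ht
    have hw := one_sub_div_add_pos hy (Ioo_subset_Icc_self ht)
    have hd : HasDerivAt (fun t : ℝ => (1 - t) / y + t) (1 - 1 / y) t := by
      refine ((((hasDerivAt_id t).const_sub 1).div_const y).add (hasDerivAt_id t)).congr_deriv ?_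
      ring
    refine (((Real.hasDerivAt_rpow_const (p := 1 - α) (Or.inl ht.1.ne')).mul
      (hd.rpow_const (p := α - 1) (Or.inl hw.ne'))).const_mul (y / (1 - α))).congr_deriv ?_
    have hw' : ((1 - t) / y + t) ^ (α - 1) = ((1 - t) / y + t) ^ (α - 1 - 1) * ((1 - t) / y + t) := by
      rw [← Real.rpow_add_one hw.ne', sub_add_cancel]
    have ht' : t ^ (1 - α) = t ^ (-α) * t := by
      rw [← Real.rpow_add_one ht.1.ne', neg_add_eq_sub]
    rw [show -(2 - α) = α - 1 - 1 by ring, show 1 - α - 1 = -α by ring, hw', ht']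
    field_simp
    ring
  have hcont : ContinuousOn F (Icc 0 1) := by
    refine continuousOn_const.mul (ContinuousOn.mul ?_ ?_)
    · exact continuousOn_id.rpow_const fun _ _ => Or.inr h1α.le
    · exact ContinuousOn.rpow_const (by fun_prop) fun t ht => Or.inl (one_sub_div_add_pos hy ht).ne'
  rw [timeMapKernel, integral_eq_sub_of_hasDeriv_right_of_le zero_le_one hcont
    (fun t ht => (hF t ht).hasDerivWithinAt) (intervalIntegrable_timeMapKernel _ hα hy)]
  simp [F, Real.zero_rpow h1α.ne']

lemma integral_eq_timeMapKernel (a α β : ℝ) {y : ℝ} (hy : 0 < y) :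
    ∫ ξ in y..1, |a - a * ξ| ^ (-α) * |ξ| ^ (-β) =
      (1 - y) * |a * (1 - y)| ^ (-α) * y ^ (-β) * timeMapKernel α β y := by
  have hsub := smul_integral_comp_mul_add (a := 0) (b := 1)
    (fun ξ => |a - a * ξ| ^ (-α) * |ξ| ^ (-β)) (-(1 - y)) 1
  have hpt : ∀ t ∈ uIcc (0:ℝ) 1, |a - a * (-(1 - y) * t + 1)| ^ (-α) * |-(1 - y) * t + 1| ^ (-β) =
      |a * (1 - y)| ^ (-α) * y ^ (-β) * (t ^ (-α) * ((1 - t) / y + t) ^ (-β)) := by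
    intro t ht
    rw [uIcc_of_le zero_le_one] at ht
    have hw := one_sub_div_add_pos hy ht
    rw [show a - a * (-(1 - y) * t + 1) = a * (1 - y) * t by ring,
      show -(1 - y) * t + 1 = y * ((1 - t) / y + t) by field_simp; ring,
      abs_mul, abs_of_nonneg ht.1, abs_of_pos (mul_pos hy hw),
      Real.mul_rpow (abs_nonneg _) ht.1, Real.mul_rpow hy.le hw.le]
    ring
  simp only [mul_zero, mul_one, zero_add] at hsub
  rw [integral_congr hpt, intervalIntegral.integral_const_mul, smul_eq_mul,
    show -(1 - y) + 1 = y by ring] at hsub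
  rw [integral_symm, ← hsub, timeMapKernel]
  ring

lemma integral_div_mul_eq_neg_mul_integral (a α β z : ℝ) {b : ℝ} (hb : b ≠ 0) :
    ∫ ξ in a / b..a / b * z, |b * ξ - a| ^ (-α) * |ξ| ^ (-β) =
      -(a / b * |a / b| ^ (-β)) * ∫ ξ in z..1, |a - a * ξ| ^ (-α) * |ξ| ^ (-β) := by
  have hsub := smul_integral_comp_mul_left (a := 1) (b := z)
    (fun ξ => |b * ξ - a| ^ (-α) * |ξ| ^ (-β)) (a / b)
  have hpt : ∀ η : ℝ, |b * (a / b * η) - a| ^ (-α) * |a / b * η| ^ (-β) =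
      |a / b| ^ (-β) * (|a - a * η| ^ (-α) * |η| ^ (-β)) := by
    intro η
    rw [show b * (a / b * η) - a = -(a - a * η) by field_simp; ring, abs_neg, abs_mul,
      Real.mul_rpow (abs_nonneg _) (abs_nonneg _)]
    ring
  simp only [hpt, intervalIntegral.integral_const_mul, mul_one, smul_eq_mul] at hsub
  rw [← hsub, integral_symm]
  ring

noncomputable def timeIntegral₁ (α β a b ρ : ℝ) : ℝ :=
  ∫ ξ in (a * (ρ + 1) / (a + b))..1, |a - a * ξ| ^ (-α) * |ξ| ^ (-β)

noncomputable def timeIntegral₂ (α β a b ρ : ℝ) : ℝ :=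
  ∫ ξ in (a / b)..(a / (a + b) * ((ρ + 1) / ρ)), |b * ξ - a| ^ (-α) * |ξ| ^ (-β)

lemma timeIntegral₁_div_timeIntegral₂ {α β a b ρ : ℝ} (hα : α < 1) (ha : 0 < a) (hb : 0 < b)
    (hρ : 0 < ρ) (hρb : ρ ≠ b / a) :
    timeIntegral₁ α β a b ρ / timeIntegral₂ α β a b ρ =
      b / a * ρ ^ (1 - α - β) * (timeMapKernel α β (a * (ρ + 1) / (a + b)) /
        timeMapKernel α β (b * (ρ + 1) / ((a + b) * ρ))) := by
  set y₁ := a * (ρ + 1) / (a + b) with hy₁_def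
  set y₂ := b * (ρ + 1) / ((a + b) * ρ) with hy₂_def
  have hy₁ : 0 < y₁ := by positivity
  have hy₂ : 0 < y₂ := by positivity
  have hK₁ := timeMapKernel_pos β hα hy₁
  have hK₂ := timeMapKernel_pos β hα hy₂
  have hu : 1 - y₁ ≠ 0 := by
    rw [hy₁_def, show 1 - a * (ρ + 1) / (a + b) = (b - a * ρ) / (a + b) by field_simp; ring]
    refine div_ne_zero (sub_ne_zero.2 fun h => hρb ?_) (by positivity)
    field_simp
    linarith
  have h1y₂ : 1 - y₂ = -((1 - y₁) / ρ) := by rw [hy₁_def, hy₂_def]; field_simp; ring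
  have hT₂ : timeIntegral₂ α β a b ρ =
      -(a / b * |a / b| ^ (-β)) * ((1 - y₂) * |a * (1 - y₂)| ^ (-α) * y₂ ^ (-β) *
        timeMapKernel α β y₂) := by
    rw [timeIntegral₂, show a / (a + b) * ((ρ + 1) / ρ) = a / b * y₂ by
      rw [hy₂_def]; field_simp, integral_div_mul_eq_neg_mul_integral _ _ _ _ hb.ne', integral_eq_timeMapKernel _ _ _ hy₂]
  have hA : |a * (1 - y₂)| ^ (-α) = |a * (1 - y₁)| ^ (-α) / ρ ^ (-α) := by
    rw [h1y₂, mul_neg, abs_neg, ← mul_div_assoc, abs_div, abs_of_pos hρ,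
      Real.div_rpow (abs_nonneg _) hρ.le]
  have hY : y₂ ^ (-β) = y₁ ^ (-β) * (b / a) ^ (-β) / ρ ^ (-β) := by
    rw [show y₂ = y₁ * (b / a) / ρ by rw [hy₁_def, hy₂_def]; field_simp,
      Real.div_rpow (by positivity) hρ.le, Real.mul_rpow hy₁.le (by positivity)]
  have hC : |a / b| ^ (-β) * (b / a) ^ (-β) = 1 := by
    rw [abs_of_pos (by positivity), ← Real.mul_rpow (by positivity) (by positivity),
      show a / b * (b / a) = 1 by field_simp, Real.one_rpow]
  have hR : ρ ^ (1 - α - β) = ρ * ρ ^ (-α) * ρ ^ (-β) := by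
    rw [show 1 - α - β = 1 + -α + -β by ring, Real.rpow_add hρ, Real.rpow_add hρ, Real.rpow_one]
  rw [timeIntegral₁, integral_eq_timeMapKernel _ _ _ hy₁, hT₂, hA, hY, hR, h1y₂]
  have hρα := Real.rpow_pos_of_pos hρ (-α)
  have hρβ := Real.rpow_pos_of_pos hρ (-β)
  have hy₁β := Real.rpow_pos_of_pos hy₁ (-β)
  have hu₁α : |a * (1 - y₁)| ^ (-α) ≠ 0 := (Real.rpow_pos_of_pos (by positivity) _).ne'
  field_simp
  exact hC.symm

lemma strictMonoOn_timeMapKernel_div {α β a b : ℝ} (hα : α < 1) (hβ : 0 < β) (ha : 0 < a)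
    (hb : 0 < b) :
    StrictMonoOn (fun ρ => timeMapKernel α β (a * (ρ + 1) / (a + b)) /
      timeMapKernel α β (b * (ρ + 1) / ((a + b) * ρ))) (Ioi 0) := by
  intro ρ (hρ : 0 < ρ) σ (hσ : 0 < σ) hρσ
  have hK := strictMonoOn_timeMapKernel hα hβ
  refine div_lt_div₀ (hK (by positivity : (0:ℝ) < _) (by positivity : (0:ℝ) < _) (by gcongr))
    (hK (by positivity : (0:ℝ) < _) (by positivity : (0:ℝ) < _) ?_).le
    (timeMapKernel_pos β hα (by positivity)).le (timeMapKernel_pos β hα (by positivity))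
  rw [div_lt_div_iff₀ (by positivity) (by positivity)]
  nlinarith [mul_pos (mul_pos hb (add_pos ha hb)) (sub_pos.2 hρσ)]

lemma strictMonoOn_rpow_mul_timeIntegral_div {α β a b : ℝ} {S : Set ℝ} (hα : α < 1)
    (hβ : 0 < β) (ha : 0 < a) (hb : 0 < b) (hS : ∀ ρ ∈ S, 0 < ρ ∧ ρ ≠ b / a) :
    StrictMonoOn (fun ρ => ρ ^ (-1 + β + α) *
      (timeIntegral₁ α β a b ρ / timeIntegral₂ α β a b ρ)) S := by
  have key : ∀ ρ ∈ S, ρ ^ (-1 + β + α) * (timeIntegral₁ α β a b ρ / timeIntegral₂ α β a b ρ) =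
      b / a * (timeMapKernel α β (a * (ρ + 1) / (a + b)) /
        timeMapKernel α β (b * (ρ + 1) / ((a + b) * ρ))) := by
    intro ρ hρ
    obtain ⟨hρ₀, hρb⟩ := hS ρ hρ
    rw [timeIntegral₁_div_timeIntegral₂ hα ha hb hρ₀ hρb, ← mul_assoc, mul_left_comm,
      ← Real.rpow_add hρ₀, show -1 + β + α + (1 - α - β) = 0 by ring, Real.rpow_zero, mul_one]
  intro ρ hρ σ hσ hρσ
  simp only [key ρ hρ, key σ hσ]
  exact mul_lt_mul_of_pos_left
    (strictMonoOn_timeMapKernel_div hα hβ ha hb (hS ρ hρ).1 (hS σ hσ).1 hρσ) (div_pos hb ha)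

lemma timeIntegral₁_div_timeIntegral₂_eq_one {α a b ρ : ℝ} (hα : α < 1) (ha : 0 < a)
    (hb : 0 < b) (hρ : 0 < ρ) (hρb : ρ ≠ b / a) :
    timeIntegral₁ α (2 - α) a b ρ / timeIntegral₂ α (2 - α) a b ρ = 1 := by
  have h1α : 1 - α ≠ 0 := by linarith
  rw [timeIntegral₁_div_timeIntegral₂ hα ha hb hρ hρb, timeMapKernel_two_sub hα (by positivity),
    timeMapKernel_two_sub hα (by positivity), show 1 - α - (2 - α) = -1 by ring,
    Real.rpow_neg_one]
  field_simp

theorem stmt_16_general (p ap am γ : ℝ) (hp : 1 < p) (hap : 0 < ap) (ham : 0 < am)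
    (I₁ I₂ Fp : ℝ → ℝ)
    (hI₁ : ∀ ρ : ℝ, I₁ ρ =
      ∫ ξ in (ap * (ρ + 1) / (ap + am))..1,
        |ap - ap * ξ| ^ (-(1 / p)) * |ξ| ^ (-(γ / (γ + 1))))
    (hI₂ : ∀ ρ : ℝ, I₂ ρ =
      ∫ ξ in (ap / am)..(ap / (ap + am) * ((ρ + 1) / ρ)),
        |am * ξ - ap| ^ (-(1 / p)) * |ξ| ^ (-(γ / (γ + 1))))
    (hFp : ∀ ρ : ℝ, Fp ρ = ρ ^ (-1 + γ / (γ + 1) + 1 / p) * (I₁ ρ / I₂ ρ)) :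
    (p - 1 < γ → StrictMonoOn Fp (Ioo 0 (am / ap))) ∧
      (γ ≤ (1 - 2 * p) / (p - 1) → StrictMonoOn Fp (Ioi (am / ap))) ∧
      (γ = (1 - 2 * p) / (p - 1) →
        ∃ c : ℝ, ∀ ρ ∈ Ioi (am / ap), I₁ ρ / I₂ ρ = c) := by
  obtain rfl : Fp = fun ρ => ρ ^ (-1 + γ / (γ + 1) + 1 / p) * (I₁ ρ / I₂ ρ) := funext hFp
  obtain rfl : I₁ = timeIntegral₁ (1 / p) (γ / (γ + 1)) ap am := funext hI₁
  obtain rfl : I₂ = timeIntegral₂ (1 / p) (γ / (γ + 1)) ap am := funext hI₂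
  have hα : 1 / p < 1 := (div_lt_one (by linarith)).2 hp
  refine ⟨fun hγ => ?_, fun hγ => ?_, fun hγ => ⟨1, fun ρ hρ => ?_⟩⟩
  · exact strictMonoOn_rpow_mul_timeIntegral_div hα (div_pos (by linarith) (by linarith))
      hap ham fun ρ hρ => ⟨hρ.1, hρ.2.ne⟩
  · have hγ₁ : γ < -1 := hγ.trans_lt <| by
      rw [div_lt_iff₀ (by linarith)]
      linarith
    exact strictMonoOn_rpow_mul_timeIntegral_div hα
      (div_pos_of_neg_of_neg (by linarith) (by linarith)) hap ham
      fun ρ (hρ : _ < ρ) => ⟨(div_pos ham hap).trans hρ, hρ.ne'⟩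
  · have hp₀ : p ≠ 0 := by linarith
    have hp₁ : p - 1 ≠ 0 := by linarith
    have hβ : γ / (γ + 1) = 2 - 1 / p := by
      rw [hγ, div_add_one hp₁, div_div_div_cancel_right₀ hp₁,
        show 1 - 2 * p + (p - 1) = -p by ring]
      field_simp
      ring
    rw [hβ]
    exact timeIntegral₁_div_timeIntegral₂_eq_one hα hap ham ((div_pos ham hap).trans hρ) hρ.ne'

/-- strict monotonicity of the p-Laplacian time-map ratio
`F_p(ρ) = ρ^{-1+γ/(γ+1)+1/p} I₁(ρ)/I₂(ρ)`. -/
theorem stmt_16 (p ap am γ : ℝ) (hp : 1 < p) (hap : 0 < ap) (ham : 0 < am)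
    (hγ : p - 1 < γ ∨ γ ≤ (1 - 2 * p) / (p - 1))
    (I₁ I₂ Fp : ℝ → ℝ)
    (hI₁ : ∀ ρ : ℝ, I₁ ρ =
      ∫ ξ in (ap * (ρ + 1) / (ap + am))..1,
        |ap - ap * ξ| ^ (-(1 / p)) * |ξ| ^ (-(γ / (γ + 1))))
    (hI₂ : ∀ ρ : ℝ, I₂ ρ =
      ∫ ξ in (ap / am)..(ap / (ap + am) * ((ρ + 1) / ρ)),
        |am * ξ - ap| ^ (-(1 / p)) * |ξ| ^ (-(γ / (γ + 1))))
    (hFp : ∀ ρ : ℝ, Fp ρ = ρ ^ (-1 + γ / (γ + 1) + 1 / p) * (I₁ ρ / I₂ ρ)) :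
    (p - 1 < γ → StrictMonoOn Fp (Ioo 0 (am / ap))) ∧
      (γ ≤ (1 - 2 * p) / (p - 1) → StrictMonoOn Fp (Ioi (am / ap))) ∧
      (γ = (1 - 2 * p) / (p - 1) →
        ∃ c : ℝ, ∀ ρ ∈ Ioi (am / ap), I₁ ρ / I₂ ρ = c) :=
  stmt_16_general p ap am γ hp hap ham I₁ I₂ Fp hI₁ hI₂ hFp
end
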